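/- arXiv:1011.0178 — 11 statements merged into one kernel-verified Lean document; each statement's English description precedes it below -/
import Mathlib

section
/- Let B be a real n×n matrix with a unique eigenvalue μ (so B − μI is nilpotent). Then the kernel of (B − μI) equals the kernel of (e^B − e^μ I). -/
open Polynomial NormedSpace Finset
open scoped Nat

/-!
By Cayley–Hamilton `N = B - μ • 1` is nilpotent, and it commutes with `μ • 1`, so
`exp B - e^μ • 1 = e^μ • (exp N - 1)`. For nilpotent `N` the exponential series terminates and
`exp N - 1 = u * N` with `u = ∑ N^k / (k + 1)!`; as `u - 1` is a multiple of `N`, it is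
nilpotent and `u` is invertible. Hence `exp B - e^μ • 1` is `N` times a unit, and the two
matrices have the same kernel.
-/

theorem isUnit_sum_range_smul_pow {R 𝔸 : Type*} [CommSemiring R] [Ring 𝔸] [Algebra R 𝔸] {a : 𝔸}
    (ha : IsNilpotent a) {c : ℕ → R} (hc : c 0 = 1) (n : ℕ) :
    IsUnit (∑ k ∈ range (n + 1), c k • a ^ k) := by
  have hcomm : Commute a (∑ k ∈ range n, c (k + 1) • a ^ k) :=
    Commute.sum_right _ _ _ fun k _ => ((Commute.refl a).pow_right k).smul_right _
  have hsum : ∑ k ∈ range (n + 1), c k • a ^ k = 1 + a * ∑ k ∈ range n, c (k + 1) • a ^ k := by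
    simp [sum_range_succ', hc, mul_sum, pow_succ', add_comm]
  rw [hsum]
  exact (hcomm.isNilpotent_mul_right ha).isUnit_add_left_of_commute isUnit_one
    (Commute.one_right _)

section NilpotentExp

variable {𝔸 : Type*} [Ring 𝔸] [Algebra ℚ 𝔸] [TopologicalSpace 𝔸] [IsTopologicalRing 𝔸]

theorem NormedSpace.exp_eq_sum_range_of_pow_eq_zero {a : 𝔸} {n : ℕ} (h : a ^ n = 0) :
    exp a = ∑ k ∈ range n, (k !⁻¹ : ℚ) • a ^ k := by
  rw [exp_eq_tsum_rat]
  refine tsum_eq_sum fun k hk => ?_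
  rw [pow_eq_zero_of_le (by simpa using hk) h, smul_zero]

theorem NormedSpace.exp_sub_one_eq_sum_mul_of_pow_eq_zero {a : 𝔸} {n : ℕ}
    (h : a ^ (n + 1) = 0) :
    exp a - 1 = (∑ k ∈ range (n + 1), ((k + 1)! : ℚ)⁻¹ • a ^ k) * a := by
  rw [exp_eq_sum_range_of_pow_eq_zero (pow_eq_zero_of_le (n + 1).le_succ h), sum_range_succ',
    sum_mul]
  simp [pow_succ]

theorem NormedSpace.exists_isUnit_exp_sub_one_eq_mul_of_isNilpotent {a : 𝔸}
    (ha : IsNilpotent a) : ∃ u : 𝔸, IsUnit u ∧ exp a - 1 = u * a := by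
  obtain ⟨n, hn⟩ := ha
  exact ⟨_, isUnit_sum_range_smul_pow (c := fun k => ((k + 1)! : ℚ)⁻¹) ⟨n, hn⟩ (by simp) n,
    exp_sub_one_eq_sum_mul_of_pow_eq_zero (pow_eq_zero_of_le n.le_succ hn)⟩

end NilpotentExp

namespace Matrix

variable {m : Type*} [Fintype m] [DecidableEq m]

theorem exp_smul_one_add {𝕂 : Type*} [RCLike 𝕂] (x : 𝕂) (A : Matrix m m 𝕂) :
    exp (x • (1 : Matrix m m 𝕂) + A) = exp x • exp A := by
  rw [exp_add_of_commute _ _ ((Commute.one_left A).smul_left x),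
    ← Algebra.algebraMap_eq_smul_one, Algebra.smul_def]
  open scoped Matrix.Norms.Operator in
  exact congrArg (· * exp A) (algebraMap_exp_comm x).symm

variable {R : Type*} [CommRing R]

theorem pow_sub_smul_one_eq_zero_of_charpoly_eq {B : Matrix m m R} {μ : R} {k : ℕ}
    (h : B.charpoly = (X - C μ) ^ k) : (B - μ • (1 : Matrix m m R)) ^ k = 0 := by
  simpa [h, Algebra.algebraMap_eq_smul_one] using B.aeval_self_charpoly

theorem ker_mulVecLin_mul_of_isUnit {U : Matrix m m R} (hU : IsUnit U) (A : Matrix m m R) :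
    LinearMap.ker (U * A).mulVecLin = LinearMap.ker A.mulVecLin := by
  obtain ⟨V, hVU⟩ := hU.exists_left_inv
  have hinj : Function.Injective U.mulVecLin := fun v w hvw => by
    simpa [hVU] using congrArg V.mulVec hvw
  rw [mulVecLin_mul, LinearMap.ker_comp, LinearMap.ker_eq_bot.mpr hinj, Submodule.comap_bot]

end Matrix

/-- Lemma 3.1(i): If `B` is a real `n × n` matrix with unique eigenvalue `μ`
(i.e. its characteristic polynomial is `(X - μ)^n`), then
`Ker (B - μ I) = Ker (exp B - e^μ I)`. -/
theorem ker_sub_smul_one_eq_ker_exp_sub_exp_smul_one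
    (n : ℕ) (B : Matrix (Fin n) (Fin n) ℝ) (μ : ℝ)
    (h : B.charpoly = (X - C μ) ^ n) :
    LinearMap.ker (Matrix.mulVecLin (B - μ • (1 : Matrix (Fin n) (Fin n) ℝ))) =
      LinearMap.ker
        (Matrix.mulVecLin (exp B - Real.exp μ • (1 : Matrix (Fin n) (Fin n) ℝ))) := by
  set N := B - μ • (1 : Matrix (Fin n) (Fin n) ℝ)
  obtain ⟨U, hU, hexpN⟩ := exists_isUnit_exp_sub_one_eq_mul_of_isNilpotent
    ⟨n, Matrix.pow_sub_smul_one_eq_zero_of_charpoly_eq h⟩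
  have hexpB : exp B - Real.exp μ • 1 = (algebraMap ℝ _ (Real.exp μ) * U) * N := by
    rw [show B = μ • 1 + N by simp [N], Matrix.exp_smul_one_add, ← Real.exp_eq_exp_ℝ,
      ← smul_sub, hexpN, Algebra.smul_def, mul_assoc]
  rw [hexpB, Matrix.ker_mulVecLin_mul_of_isUnit (((Real.exp_pos μ).ne'.isUnit.map _).mul hU)]
end

section
/- Let A, B be lower triangular n×n matrices over a field K (ℝ or ℂ) each with a single scalar value on the diagonal, such that AB = BA and e^A = e^B. If K = ℝ, then A = B. If K = ℂ, then A = B + 2πik·I for some integer k. -/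
/-!
Write `X = A - B`. Since `A` and `B` commute, `exp X = 1`, and `X` again lies in `𝕋_n`, so
`X = c • 1 + D` with `D` strictly lower triangular, hence nilpotent. Then
`1 = exp X = exp c • exp D`, and `exp D - 1` is nilpotent; a scalar matrix that is unipotent is
the identity, so `exp c = 1` and `exp D = 1`. For nilpotent `D` the series `exp D` is a polynomial
in `D` whose lowest nonconstant term is `D` itself, so `exp D = 1` forces `D = 0`. Finally
`exp c = 1` means `c = 0` over `ℝ` and `c ∈ 2πiℤ` over `ℂ`.
-/

open NormedSpace

/-- `A` is lower triangular with all diagonal entries equal (the set `𝕋_n(K)`). -/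
def LowerTriConstDiag {K : Type*} [Semiring K] {n : ℕ}
    (A : Matrix (Fin n) (Fin n) K) : Prop :=
  (∀ i j : Fin n, i < j → A i j = 0) ∧ ∀ i j : Fin n, A i i = A j j

theorem NormedSpace.exp_eq_isNilpotentExp {𝔸 : Type*} [Ring 𝔸] [Algebra ℚ 𝔸]
    [TopologicalSpace 𝔸] [IsTopologicalRing 𝔸] [T2Space 𝔸] {x : 𝔸} (hx : IsNilpotent x) :
    exp x = IsNilpotent.exp x := by
  obtain ⟨k, hk⟩ := hx
  rw [exp_eq_tsum_rat, IsNilpotent.exp_eq_sum hk]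
  exact tsum_eq_sum fun i hi ↦ by rw [pow_eq_zero_of_le (by simpa using hi) hk, smul_zero]

theorem IsNilpotent.eq_zero_of_exp_eq_one {A : Type*} [Ring A] [Module ℚ A] {x : A}
    (hx : IsNilpotent x) (h : IsNilpotent.exp x = 1) : x = 0 := by
  -- if `x ^ (j + 2) = 0` then `x ^ j = exp x * x ^ j = x ^ j + x ^ (j + 1)`
  have step : ∀ j, x ^ (j + 2) = 0 → x ^ (j + 1) = 0 := fun j hj ↦ by
    have := IsNilpotent.exp_smul_eq_sum (m := x ^ j) (k := 2)
      (by rwa [smul_eq_mul, ← pow_add, add_comm]) hx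
    simpa [h, Finset.sum_range_succ, ← pow_succ'] using this
  have descend : ∀ j, x ^ (j + 1) = 0 → x = 0 := fun j ↦ by
    induction j with
    | zero => simp
    | succ j ih => exact fun hj ↦ ih (step j hj)
  obtain ⟨k, hk⟩ := hx
  exact descend k (pow_eq_zero_of_le k.le_succ hk)

theorem eq_one_of_algebraMap_mul_eq_one {K A : Type*} [Field K] [Ring A] [Algebra K A]
    [Nontrivial A] {a : K} {u : A} (hu : IsNilpotent (u - 1)) (h : algebraMap K A a * u = 1) :
    a = 1 := by
  have ha : a ≠ 0 := by rintro rfl; simp at h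
  have hu' : u - 1 = algebraMap K A (a⁻¹ - 1) := by
    rw [map_sub, map_one, ← one_mul u, ← map_one (algebraMap K A), ← inv_mul_cancel₀ ha, map_mul,
      mul_assoc, h, mul_one]
  rwa [hu', IsNilpotent.map_iff (algebraMap K A).injective, isNilpotent_iff_eq_zero, sub_eq_zero,
    inv_eq_one] at hu

namespace Matrix

theorem pow_eq_zero_of_strictLowerTriangular {R : Type*} [Semiring R] {n : ℕ}
    {N : Matrix (Fin n) (Fin n) R} (hN : ∀ i j : Fin n, i ≤ j → N i j = 0) : N ^ n = 0 := by
  have band : ∀ (k : ℕ) (i j : Fin n), (i : ℕ) < j + k → (N ^ k) i j = 0 := by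
    intro k
    induction k with
    | zero => exact fun i j hij ↦ one_apply_ne (by rintro rfl; omega)
    | succ k ih =>
      intro i j hij
      rw [pow_succ, mul_apply]
      refine Finset.sum_eq_zero fun l _ ↦ ?_
      rcases lt_or_ge (i : ℕ) (l + k) with hl | hl
      · rw [ih i l hl, zero_mul]
      · rw [hN l j (Fin.le_def.2 (by omega)), mul_zero]
  ext i j
  exact band n i j (by omega)

theorem exp_algebraMap {m 𝕂 : Type*} [Fintype m] [DecidableEq m] [NormedCommRing 𝕂]
    [NormedAlgebra ℚ 𝕂] [CompleteSpace 𝕂] (c : 𝕂) :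
    exp (algebraMap 𝕂 (Matrix m m 𝕂) c) = algebraMap 𝕂 (Matrix m m 𝕂) (exp c) := by
  rw [algebraMap_eq_diagonal, exp_diagonal, Pi.exp_def]
  rfl

theorem exp_sub_eq_one_of_exp_eq_exp {m 𝔸 : Type*} [Fintype m] [DecidableEq m] [NormedRing 𝔸]
    [NormedAlgebra ℚ 𝔸] [CompleteSpace 𝔸] {A B : Matrix m m 𝔸} (hAB : Commute A B)
    (h : exp A = exp B) : exp (A - B) = 1 := by
  have hsplit := exp_add_of_commute (A - B) B (hAB.sub_left (Commute.refl B))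
  rw [sub_add_cancel, h] at hsplit
  exact (isUnit_exp B).mul_eq_right.1 hsplit.symm

end Matrix

namespace LowerTriConstDiag

variable {n : ℕ}

theorem sub {K : Type*} [Ring K] {A B : Matrix (Fin n) (Fin n) K} (hA : LowerTriConstDiag A)
    (hB : LowerTriConstDiag B) : LowerTriConstDiag (A - B) :=
  ⟨fun i j hij ↦ by simp [hA.1 i j hij, hB.1 i j hij], fun i j ↦ by simp [hA.2 i j, hB.2 i j]⟩

theorem isNilpotent_sub_algebraMap {K : Type*} [CommRing K] {X : Matrix (Fin n) (Fin n) K}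
    (hX : LowerTriConstDiag X) (k : Fin n) : IsNilpotent (X - algebraMap K _ (X k k)) := by
  refine ⟨n, Matrix.pow_eq_zero_of_strictLowerTriangular fun i j hij ↦ ?_⟩
  rcases hij.eq_or_lt with rfl | hij
  · simp [Matrix.algebraMap_eq_diagonal, hX.2 i k]
  · simp [Matrix.algebraMap_eq_diagonal, hX.1 i j hij, hij.ne]

theorem exists_eq_algebraMap_of_exp_eq_one {𝕂 : Type*} [NormedField 𝕂] [NormedAlgebra ℚ 𝕂]
    [CompleteSpace 𝕂] {X : Matrix (Fin n) (Fin n) 𝕂} (hX : LowerTriConstDiag X)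
    (h : exp X = 1) : ∃ c : 𝕂, exp c = 1 ∧ X = algebraMap 𝕂 _ c := by
  rcases n.eq_zero_or_pos with rfl | hn
  · exact ⟨0, exp_zero, Subsingleton.elim _ _⟩
  have : NeZero n := ⟨hn.ne'⟩
  set c := X 0 0
  have hD := hX.isNilpotent_sub_algebraMap 0
  have hsplit : algebraMap 𝕂 _ (exp c) * IsNilpotent.exp (X - algebraMap 𝕂 _ c) = 1 := by
    rw [← exp_eq_isNilpotentExp hD, ← Matrix.exp_algebraMap,
      ← Matrix.exp_add_of_commute _ _ (Algebra.commute_algebraMap_left _ _), add_sub_cancel, h]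
  have hc : exp c = 1 := eq_one_of_algebraMap_mul_eq_one hD.isNilpotent_exp_sub_one hsplit
  rw [hc, map_one, one_mul] at hsplit
  exact ⟨c, hc, sub_eq_zero.1 (hD.eq_zero_of_exp_eq_one hsplit)⟩

end LowerTriConstDiag

/-- Lemma 3.5 / Proposition 3.6(i): for commuting `A, B ∈ 𝕋_n(K)` with `exp A = exp B`:
over `ℝ` one gets `A = B`, and over `ℂ` one gets `A = B + 2πik·I` for some integer `k`. -/
theorem exp_eq_exp_of_commute_lowerTri (n : ℕ) :
    (∀ A B : Matrix (Fin n) (Fin n) ℝ, LowerTriConstDiag A → LowerTriConstDiag B →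
      A * B = B * A → exp A = exp B → A = B) ∧
    (∀ A B : Matrix (Fin n) (Fin n) ℂ, LowerTriConstDiag A → LowerTriConstDiag B →
      A * B = B * A → exp A = exp B →
      ∃ k : ℤ, A = B + ((2 * (Real.pi : ℂ) * (k : ℂ)) * Complex.I) •
        (1 : Matrix (Fin n) (Fin n) ℂ)) := by
  constructor
  · intro A B hA hB hcomm hexp
    obtain ⟨c, hc, hAB⟩ := (hA.sub hB).exists_eq_algebraMap_of_exp_eq_one
      (Matrix.exp_sub_eq_one_of_exp_eq_exp hcomm hexp)
    rw [← Real.exp_eq_exp_ℝ, Real.exp_eq_one_iff] at hc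
    rwa [hc, map_zero, sub_eq_zero] at hAB
  · intro A B hA hB hcomm hexp
    obtain ⟨c, hc, hAB⟩ := (hA.sub hB).exists_eq_algebraMap_of_exp_eq_one
      (Matrix.exp_sub_eq_one_of_exp_eq_exp hcomm hexp)
    obtain ⟨k, rfl⟩ := Complex.exp_eq_one_iff.1 (by rwa [← Complex.exp_eq_exp_ℂ] at hc)
    refine ⟨k, ?_⟩
    rw [sub_eq_iff_eq_add', Algebra.algebraMap_eq_smul_one] at hAB
    rw [hAB]
    congr 2
    ring
end

section
/- Let A, B be lower triangular n×n matrices over ℝ (or ℂ), each with constant diagonal, such that e^A e^B = e^B e^A. Then for all real t, e^{tA} e^{tB} = e^{tB} e^{tA}. -/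
/-!
Write `A = c • 1 + N` with `N` strictly lower triangular, hence nilpotent. Then
`exp (z • A) = exp (z * c) • P(z)` for a matrix `P` of polynomials in `z`, and likewise for `B`,
so the commutator of `exp (z • A)` and `exp (z • B)` is a nonvanishing scalar times a polynomial
matrix in `z`. At `z = k ∈ ℕ` it vanishes, because `exp (k • A) = (exp A) ^ k`; a polynomial with
infinitely many roots is zero, so the commutator vanishes for every `z`.
-/

open NormedSpace

open Polynomial Finset
open scoped Nat

lemma Matrix.pow_card_eq_zero_of_forall_le_eq_zero {m R : Type*} [Fintype m] [DecidableEq m]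
    [LinearOrder m] [CommRing R] {N : Matrix m m R} (hN : ∀ i j, i ≤ j → N i j = 0) :
    N ^ Fintype.card m = 0 := by
  have hchar : N.charpoly = X ^ Fintype.card m := by
    rw [Matrix.charpoly, Matrix.det_of_isLowerTriangular]
    · simp [hN]
    · intro i j hij
      simp [(show i ≠ j from hij.ne'), hN i j hij.le]
  simpa [hchar] using N.aeval_self_charpoly

theorem NormedSpace.exp_eq_sum_range_of_pow_eq_zero_s3 {𝕂 𝔸 : Type*} [Field 𝕂] [CharZero 𝕂]
    [Ring 𝔸] [Algebra 𝕂 𝔸] [TopologicalSpace 𝔸] [IsTopologicalRing 𝔸] {x : 𝔸} {k : ℕ}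
    (hx : x ^ k = 0) : exp x = ∑ a ∈ range k, (a !⁻¹ : 𝕂) • x ^ a := by
  rw [exp_eq_tsum 𝕂]
  refine tsum_eq_sum fun a ha => ?_
  rw [pow_eq_zero_of_le (not_lt.mp (mem_range.not.mp ha)) hx, smul_zero]

lemma Matrix.exists_mapMatrix_eval_eq_exp_smul {𝕂 m : Type*} [RCLike 𝕂] [Fintype m]
    [DecidableEq m] {N : Matrix m m 𝕂} {k : ℕ} (hN : N ^ k = 0) :
    ∃ P : Matrix m m 𝕂[X], ∀ z : 𝕂, (evalRingHom z).mapMatrix P = exp (z • N) := by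
  refine ⟨∑ a ∈ range k, (X ^ a : 𝕂[X]) • C.mapMatrix ((a !⁻¹ : 𝕂) • N ^ a), fun z => ?_⟩
  rw [exp_eq_sum_range_of_pow_eq_zero_s3 (𝕂 := 𝕂) (by rw [_root_.smul_pow, hN, smul_zero]), map_sum]
  refine sum_congr rfl fun a _ => ?_
  ext i j
  simp [_root_.smul_pow, mul_comm, mul_assoc]

lemma Matrix.exp_smul_one_add_s3 {𝕂 m : Type*} [RCLike 𝕂] [Fintype m] [DecidableEq m]
    (c : 𝕂) (N : Matrix m m 𝕂) : exp (c • 1 + N) = exp c • exp N := by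
  rw [Matrix.exp_add_of_commute _ _ ((Commute.one_left N).smul_left c),
    Matrix.smul_one_eq_diagonal, Matrix.exp_diagonal, Pi.exp_def,
    ← Matrix.smul_one_eq_diagonal, smul_one_mul]

lemma LowerTriConstDiag.exists_eq_smul_one_add {K : Type*} [Ring K] {n : ℕ}
    {A : Matrix (Fin n) (Fin n) K} (hA : LowerTriConstDiag A) :
    ∃ (c : K) (N : Matrix (Fin n) (Fin n) K), A = c • 1 + N ∧ ∀ i j, i ≤ j → N i j = 0 := by
  obtain ⟨c, hc⟩ : ∃ c, ∀ i, A i i = c := by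
    rcases isEmpty_or_nonempty (Fin n) with _ | ⟨⟨i₀⟩⟩
    · exact ⟨0, isEmptyElim⟩
    · exact ⟨A i₀ i₀, fun i => hA.2 i i₀⟩
  refine ⟨c, A - c • 1, by abel, fun i j hij => ?_⟩
  rcases hij.lt_or_eq with hij | rfl
  · simp [hA.1 i j hij, hij.ne]
  · simp [hc]

lemma LowerTriConstDiag.exists_exp_smul_eq {𝕂 : Type*} [RCLike 𝕂] {n : ℕ}
    {A : Matrix (Fin n) (Fin n) 𝕂} (hA : LowerTriConstDiag A) :
    ∃ (c : 𝕂) (P : Matrix (Fin n) (Fin n) 𝕂[X]),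
      ∀ z : 𝕂, exp (z • A) = exp (z * c) • (evalRingHom z).mapMatrix P := by
  obtain ⟨c, N, rfl, hN⟩ := hA.exists_eq_smul_one_add
  obtain ⟨P, hP⟩ :=
    Matrix.exists_mapMatrix_eval_eq_exp_smul (Matrix.pow_card_eq_zero_of_forall_le_eq_zero hN)
  refine ⟨c, P, fun z => ?_⟩
  rw [hP, smul_add, smul_smul, Matrix.exp_smul_one_add_s3]

lemma Polynomial.eq_zero_of_forall_eval_natCast_eq_zero {R : Type*} [CommRing R] [IsDomain R]
    [CharZero R] {p : R[X]} (h : ∀ k : ℕ, p.eval (k : R) = 0) : p = 0 :=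
  p.eq_zero_of_infinite_isRoot (Set.infinite_of_injective_forall_mem Nat.cast_injective h)

lemma Matrix.eq_zero_of_forall_map_eval_natCast_eq_zero {m n R : Type*} [CommRing R] [IsDomain R]
    [CharZero R] {P : Matrix m n R[X]} (h : ∀ k : ℕ, P.map (eval (k : R)) = 0) : P = 0 := by
  refine Matrix.ext fun i j => ?_
  exact Polynomial.eq_zero_of_forall_eval_natCast_eq_zero fun k => congr_fun₂ (h k) i j

/-- Lemma 10.1(i): if `A, B ∈ 𝕋_n(𝕂)` (𝕂 = ℝ or ℂ) satisfy `e^A e^B = e^B e^A`,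
then `e^{tA} e^{tB} = e^{tB} e^{tA}` for every real `t`. -/
theorem exp_smul_commute_of_exp_commute
    {𝕂 : Type*} [RCLike 𝕂] (n : ℕ) (A B : Matrix (Fin n) (Fin n) 𝕂)
    (hA : LowerTriConstDiag A) (hB : LowerTriConstDiag B)
    (h : exp A * exp B = exp B * exp A) :
    ∀ t : ℝ, exp ((t : 𝕂) • A) * exp ((t : 𝕂) • B) =
      exp ((t : 𝕂) • B) * exp ((t : 𝕂) • A) := by
  intro t
  obtain ⟨c, P, hP⟩ := hA.exists_exp_smul_eq
  obtain ⟨d, Q, hQ⟩ := hB.exists_exp_smul_eq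
  have hcommutator : ∀ z : 𝕂, exp (z • A) * exp (z • B) - exp (z • B) * exp (z • A) =
      (exp (z * c) * exp (z * d)) • (evalRingHom z).mapMatrix (P * Q - Q * P) := by
    intro z
    rw [hP, hQ, map_sub, map_mul, map_mul, smul_sub]
    simp only [smul_mul_smul_comm, mul_comm (exp (z * d))]
  have hnat : ∀ k : ℕ, (P * Q - Q * P).map (eval (k : 𝕂)) = 0 := by
    intro k
    have hk : exp ((k : 𝕂) • A) * exp ((k : 𝕂) • B) -
        exp ((k : 𝕂) • B) * exp ((k : 𝕂) • A) = 0 := by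
      rw [Nat.cast_smul_eq_nsmul, Nat.cast_smul_eq_nsmul, Matrix.exp_nsmul, Matrix.exp_nsmul,
        sub_eq_zero]
      exact Commute.pow_pow h k k
    rw [hcommutator, smul_eq_zero] at hk
    exact hk.resolve_left (mul_ne_zero (isUnit_exp _).ne_zero (isUnit_exp _).ne_zero)
  rw [← sub_eq_zero, hcommutator, Matrix.eq_zero_of_forall_map_eval_natCast_eq_zero hnat,
    map_zero, smul_zero]
end

section
/- Let A, B be lower triangular n×n matrices over ℝ (or ℂ), each with constant diagonal, such that e^A e^B = e^B e^A. Then AB = BA. -/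
open NormedSpace

/-!
Write `A = a + N` and `B = b + M` with `a, b` scalars and `N, M` strictly lower triangular. The
scalars factor out of the exponentials, so `exp N` and `exp M` commute. Both series are finite, and
`0 = ⁅exp N, exp M⁆ = ⁅N, M⁆ + ∑_{(p, q) ≠ (1, 1)} ⁅N ^ p, M ^ q⁆ / (p! q!)`.
If `⁅N, M⁆` vanishes on the subdiagonals of index `< d`, then every term of the remaining sum
vanishes on those of index `< d + 1`, hence so does `⁅N, M⁆`. By induction `⁅N, M⁆ = 0`.
-/

open Finset
open scoped Nat

attribute [local instance] LieRing.ofAssociativeRing LieAlgebra.ofAssociativeAlgebra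

section NilpotentExp

variable {𝕂 𝔸 : Type*} [Field 𝕂] [CharZero 𝕂] [Ring 𝔸] [Algebra 𝕂 𝔸] [TopologicalSpace 𝔸]
  [IsTopologicalRing 𝔸]

theorem exp_eq_sum_range_of_pow_eq_zero {x : 𝔸} {m : ℕ} (hx : x ^ m = 0) :
    exp x = ∑ k ∈ range m, (k ! : 𝕂)⁻¹ • x ^ k := by
  rw [exp_eq_tsum 𝕂]
  refine tsum_eq_sum fun k hk => ?_
  rw [pow_eq_zero_of_le (by simpa using hk) hx, smul_zero]

theorem lie_exp_exp_eq_sum_of_pow_eq_zero {x y : 𝔸} {m : ℕ} (hx : x ^ m = 0) (hy : y ^ m = 0) :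
    ⁅exp x, exp y⁆ =
      ∑ p ∈ range m, ∑ q ∈ range m, ((p ! : 𝕂)⁻¹ * (q ! : 𝕂)⁻¹) • ⁅x ^ p, y ^ q⁆ := by
  simp only [exp_eq_sum_range_of_pow_eq_zero (𝕂 := 𝕂) hx,
    exp_eq_sum_range_of_pow_eq_zero (𝕂 := 𝕂) hy, sum_lie_sum, smul_lie, LieAlgebra.lie_smul,
    smul_smul]
  exact sum_congr rfl fun p _ => sum_congr rfl fun q _ => by rw [mul_comm]

end NilpotentExp

namespace Matrix

section Filtration

variable (R : Type*) [Ring R] (n : ℕ)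

def subdiagonalFiltration (d : ℕ) : Submodule R (Matrix (Fin n) (Fin n) R) where
  carrier := {X | ∀ i j : Fin n, (i : ℕ) < j + d → X i j = 0}
  add_mem' hX hY i j h := by simp [hX i j h, hY i j h]
  zero_mem' _ _ _ := rfl
  smul_mem' c X hX i j h := by simp [hX i j h]

variable {R n}

theorem subdiagonalFiltration_antitone : Antitone (subdiagonalFiltration R n) :=
  fun _ _ hde _ hX i j h => hX i j (by omega)

theorem one_mem_subdiagonalFiltration_zero :
    (1 : Matrix (Fin n) (Fin n) R) ∈ subdiagonalFiltration R n 0 :=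
  fun _ _ h => one_apply_ne (by rintro rfl; omega)

theorem mul_mem_subdiagonalFiltration {a b : ℕ} {X Y : Matrix (Fin n) (Fin n) R}
    (hX : X ∈ subdiagonalFiltration R n a) (hY : Y ∈ subdiagonalFiltration R n b) :
    X * Y ∈ subdiagonalFiltration R n (a + b) := fun i j h =>
  (mul_apply ..).trans <| sum_eq_zero fun l _ => by
    by_cases hl : (i : ℕ) < l + a
    · rw [hX i l hl, zero_mul]
    · rw [hY l j (by omega), mul_zero]

theorem pow_mem_subdiagonalFiltration {X : Matrix (Fin n) (Fin n) R}
    (hX : X ∈ subdiagonalFiltration R n 1) (k : ℕ) : X ^ k ∈ subdiagonalFiltration R n k := by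
  induction k with
  | zero => exact one_mem_subdiagonalFiltration_zero
  | succ k ih => rw [pow_succ]; exact mul_mem_subdiagonalFiltration ih hX

theorem eq_zero_of_mem_subdiagonalFiltration {d : ℕ} (hd : n ≤ d)
    {X : Matrix (Fin n) (Fin n) R} (hX : X ∈ subdiagonalFiltration R n d) : X = 0 :=
  ext fun i j => hX i j (by omega)

theorem pow_eq_zero_of_mem_subdiagonalFiltration {X : Matrix (Fin n) (Fin n) R}
    (hX : X ∈ subdiagonalFiltration R n 1) : X ^ n = 0 :=
  eq_zero_of_mem_subdiagonalFiltration le_rfl (pow_mem_subdiagonalFiltration hX n)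

theorem lie_pow_mem_subdiagonalFiltration {d : ℕ} {X Y : Matrix (Fin n) (Fin n) R}
    (hX : X ∈ subdiagonalFiltration R n 1) (hXY : ⁅Y, X⁆ ∈ subdiagonalFiltration R n d) (k : ℕ) :
    ⁅Y, X ^ (k + 1)⁆ ∈ subdiagonalFiltration R n (d + k) := by
  induction k with
  | zero => simpa using hXY
  | succ k ih =>
    have hLeibniz : ⁅Y, X ^ (k + 1) * X⁆ = ⁅Y, X ^ (k + 1)⁆ * X + X ^ (k + 1) * ⁅Y, X⁆ := by
      simp only [Ring.lie_def]; noncomm_ring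
    rw [pow_succ, hLeibniz]
    exact add_mem
      (subdiagonalFiltration_antitone (by omega) (mul_mem_subdiagonalFiltration ih hX))
      (subdiagonalFiltration_antitone (by omega)
        (mul_mem_subdiagonalFiltration (pow_mem_subdiagonalFiltration hX (k + 1)) hXY))

theorem lie_pow_pow_mem_subdiagonalFiltration {d : ℕ} {X Y : Matrix (Fin n) (Fin n) R}
    (hX : X ∈ subdiagonalFiltration R n 1) (hY : Y ∈ subdiagonalFiltration R n 1)
    (hXY : ⁅X, Y⁆ ∈ subdiagonalFiltration R n d) (p q : ℕ) :
    ⁅X ^ (p + 1), Y ^ (q + 1)⁆ ∈ subdiagonalFiltration R n (d + q + p) := by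
  have hq := lie_pow_mem_subdiagonalFiltration hY hXY q
  rw [← lie_skew] at hq ⊢
  exact neg_mem (lie_pow_mem_subdiagonalFiltration hX (neg_mem_iff.mp hq) p)

end Filtration

section Exp

variable {𝕂 : Type*} [Field 𝕂] [CharZero 𝕂] [TopologicalSpace 𝕂] [IsTopologicalRing 𝕂] {n : ℕ}
  {N M : Matrix (Fin n) (Fin n) 𝕂}

theorem lie_mem_subdiagonalFiltration_succ (hN : N ∈ subdiagonalFiltration 𝕂 n 1)
    (hM : M ∈ subdiagonalFiltration 𝕂 n 1) (h : Commute (exp N) (exp M)) {d : ℕ}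
    (hd : ⁅N, M⁆ ∈ subdiagonalFiltration 𝕂 n d) :
    ⁅N, M⁆ ∈ subdiagonalFiltration 𝕂 n (d + 1) := by
  let T : ℕ × ℕ → Matrix (Fin n) (Fin n) 𝕂 := fun pq =>
    ((pq.1 ! : 𝕂)⁻¹ * (pq.2 ! : 𝕂)⁻¹) • ⁅N ^ pq.1, M ^ pq.2⁆
  -- `n + 2` rather than `n` terms, so that `(1, 1)` is an index even when `n < 2`
  let s := range (n + 2) ×ˢ range (n + 2)
  have hsum : ∑ pq ∈ s, T pq = 0 := by
    have hpow {X : Matrix (Fin n) (Fin n) 𝕂} (hX : X ∈ subdiagonalFiltration 𝕂 n 1) :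
        X ^ (n + 2) = 0 :=
      pow_eq_zero_of_le (by omega) (pow_eq_zero_of_mem_subdiagonalFiltration hX)
    rw [sum_product, ← lie_exp_exp_eq_sum_of_pow_eq_zero (hpow hN) (hpow hM),
      commute_iff_lie_eq.mp h]
  have hterm : ∀ pq ∈ s.erase (1, 1), T pq ∈ subdiagonalFiltration 𝕂 n (d + 1) := by
    rintro ⟨_ | p, _ | q⟩ hpq
    case succ.succ =>
      have hne := (mem_erase.mp hpq).1
      rw [Ne, Prod.mk.injEq] at hne
      exact Submodule.smul_mem _ _ (subdiagonalFiltration_antitone (by omega)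
        (lie_pow_pow_mem_subdiagonalFiltration hN hM hd p q))
    all_goals simp [T, Ring.lie_def]
  have hrest : ∑ pq ∈ s.erase (1, 1), T pq = -⁅N, M⁆ := by
    rw [sum_erase_eq_sub (by simp [s]), hsum, zero_sub]
    simp [T]
  rw [← neg_mem_iff, ← hrest]
  exact sum_mem hterm

theorem commute_of_commute_exp (hN : N ∈ subdiagonalFiltration 𝕂 n 1)
    (hM : M ∈ subdiagonalFiltration 𝕂 n 1) (h : Commute (exp N) (exp M)) : Commute N M := by
  have hlie (d : ℕ) : ⁅N, M⁆ ∈ subdiagonalFiltration 𝕂 n d := by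
    induction d with
    | zero =>
      rw [Ring.lie_def]
      exact subdiagonalFiltration_antitone (Nat.zero_le 2)
        (sub_mem (mul_mem_subdiagonalFiltration hN hM) (mul_mem_subdiagonalFiltration hM hN))
    | succ d ih => exact lie_mem_subdiagonalFiltration_succ hN hM h ih
  exact commute_iff_lie_eq.mpr (eq_zero_of_mem_subdiagonalFiltration le_rfl (hlie n))

end Exp

theorem exp_sub_scalar {𝔸 m : Type*} [NormedCommRing 𝔸] [NormedAlgebra ℚ 𝔸] [CompleteSpace 𝔸]
    [Fintype m] [DecidableEq m] (A : Matrix m m 𝔸) (a : 𝔸) :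
    exp (A - scalar m a) = exp (-a) • exp A := by
  have hexp : exp (scalar m (-a)) = scalar m (exp (-a)) := by
    simp only [scalar_apply, exp_diagonal, Pi.exp_def]
  rw [sub_eq_neg_add, ← map_neg, exp_add_of_commute _ _ (scalar_commute _ (Commute.all _) _),
    hexp, smul_eq_diagonal_mul, scalar_apply]

end Matrix

theorem LowerTriConstDiag.exists_sub_scalar_mem {R : Type*} [Ring R] {n : ℕ}
    {A : Matrix (Fin n) (Fin n) R} (hA : LowerTriConstDiag A) :
    ∃ a, A - Matrix.scalar (Fin n) a ∈ Matrix.subdiagonalFiltration R n 1 := by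
  rcases n with _ | n
  · exact ⟨0, fun i => i.elim0⟩
  refine ⟨A 0 0, fun i j hij => ?_⟩
  rcases eq_or_ne i j with rfl | hne
  · simp [hA.2 i 0]
  · simp [hA.1 i j (by omega), hne]

/-- Lemma 10.1(ii) / Proposition 3.3: if `A, B ∈ 𝕋_n(𝕂)` (𝕂 = ℝ or ℂ) satisfy
`e^A e^B = e^B e^A` then `AB = BA`. -/
theorem commute_of_exp_commute
    {𝕂 : Type*} [RCLike 𝕂] (n : ℕ) (A B : Matrix (Fin n) (Fin n) 𝕂)
    (hA : LowerTriConstDiag A) (hB : LowerTriConstDiag B)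
    (h : exp A * exp B = exp B * exp A) :
    A * B = B * A := by
  obtain ⟨a, hN⟩ := hA.exists_sub_scalar_mem
  obtain ⟨b, hM⟩ := hB.exists_sub_scalar_mem
  have hexp :
      Commute (exp (A - Matrix.scalar (Fin n) a)) (exp (B - Matrix.scalar (Fin n) b)) := by
    rw [Matrix.exp_sub_scalar, Matrix.exp_sub_scalar]
    exact (Commute.smul_left h _).smul_right _
  have hAB := ((Matrix.commute_of_commute_exp hN hM hexp).add_right
    (Matrix.scalar_commute b (Commute.all b) _).symm).add_left
    (Matrix.scalar_commute a (Commute.all a) _)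
  rwa [sub_add_cancel, sub_add_cancel] at hAB
end

section
/- The matrix exponential maps 𝕋_n(ℝ) onto 𝕋_n^+(ℝ): exp(𝕋_n(ℝ)) = 𝕋_n^+(ℝ). -/
/-!
Every `A ∈ 𝕋_n` is `μ • 1 + N` with `N` strictly lower triangular, hence nilpotent. Then
`exp A = e^μ • exp N`, and `exp N - 1` is a polynomial in `N` without constant term, so it is
strictly lower triangular. Conversely, for `μ > 0`, `μ • 1 + N = μ • (1 + M)` with `M = μ⁻¹ • N`,
and `1 + M = exp L` for `L` the truncated series of `log (1 + X)` evaluated at `M`. This rests on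
the congruence `exp_N (log_N X) ≡ 1 + X mod X^(N+1)` of truncated series: both sides have
constant term `1` and satisfy `(1 + X) y' ≡ y mod X^N`, and a solution of that equation is
determined mod `X^(N+1)` by its constant term.
-/

open NormedSpace

open Polynomial Finset
open scoped Nat

namespace Polynomial

noncomputable def expTrunc (N : ℕ) : ℚ[X] :=
  ∑ k ∈ range (N + 1), C (k ! : ℚ)⁻¹ * X ^ k

noncomputable def logOneAddTrunc (N : ℕ) : ℚ[X] :=
  ∑ k ∈ range N, C ((-1) ^ k / (k + 1) : ℚ) * X ^ (k + 1)

theorem coeff_zero_expTrunc (N : ℕ) : (expTrunc N).coeff 0 = 1 := by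
  simp [expTrunc, coeff_X_pow]

theorem derivative_expTrunc (N : ℕ) :
    derivative (expTrunc N) = expTrunc N - C (N ! : ℚ)⁻¹ * X ^ N := by
  conv_lhs => rw [expTrunc, map_sum, sum_range_succ']
  rw [expTrunc, sum_range_succ, add_sub_cancel_right]
  refine (add_eq_left.2 (by simp)).trans (sum_congr rfl fun k _ => ?_)
  rw [derivative_C_mul_X_pow, Nat.add_sub_cancel, Nat.factorial_succ]
  congr 1
  push_cast
  field_simp

theorem one_add_X_mul_derivative_logOneAddTrunc (N : ℕ) :
    (1 + X) * derivative (logOneAddTrunc N) = 1 - (-X) ^ N := by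
  have hL : derivative (logOneAddTrunc N) = ∑ k ∈ range N, (-X) ^ k := by
    rw [logOneAddTrunc, map_sum]
    refine sum_congr rfl fun k _ => ?_
    have hc : (-1) ^ k / (k + 1) * ((k + 1 : ℕ) : ℚ) = (-1) ^ k := by push_cast; field_simp
    rw [derivative_C_mul_X_pow, Nat.add_sub_cancel, hc, neg_pow (X : ℚ[X]), map_pow, map_neg,
      map_one]
  rw [hL, ← mul_neg_geom_sum, sub_neg_eq_add]

theorem X_dvd_logOneAddTrunc (N : ℕ) : X ∣ logOneAddTrunc N :=
  dvd_sum fun k _ => (dvd_pow_self X k.succ_ne_zero).mul_left _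

theorem X_pow_succ_dvd_of_X_pow_dvd_one_add_X_mul_derivative_sub {K : Type*} [Field K]
    [CharZero K] {h : K[X]} {N : ℕ} (h0 : h.coeff 0 = 0)
    (hN : X ^ N ∣ (1 + X) * derivative h - h) : X ^ (N + 1) ∣ h := by
  rw [X_pow_dvd_iff] at hN ⊢
  intro d hd
  induction d with
  | zero => exact h0
  | succ d ih =>
    have hrec := hN d (by omega)
    -- coefficient `d` of `(1 + X) h' - h` is `(d + 1) h_{d+1} + (d - 1) h_d`
    rcases d with _ | d
    · simpa [coeff_derivative, h0] using hrec
    · simp [add_mul, coeff_derivative, coeff_X_mul, ih (by omega)] at hrec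
      exact hrec.resolve_right (by norm_cast)

theorem X_pow_succ_dvd_expTrunc_comp_logOneAddTrunc_sub (N : ℕ) :
    X ^ (N + 1) ∣ (expTrunc N).comp (logOneAddTrunc N) - (1 + X) := by
  set L := logOneAddTrunc N
  set F := (expTrunc N).comp L
  have hF : (1 + X) * derivative F = (F - C (N ! : ℚ)⁻¹ * L ^ N) * (1 - (-X) ^ N) := by
    rw [derivative_comp, derivative_expTrunc, sub_comp, mul_comp, C_comp, X_pow_comp,
      ← one_add_X_mul_derivative_logOneAddTrunc]
    ring
  refine X_pow_succ_dvd_of_X_pow_dvd_one_add_X_mul_derivative_sub ?_ ?_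
  · rw [coeff_sub, coeff_zero_eq_eval_zero, eval_comp, ← coeff_zero_eq_eval_zero,
      X_dvd_iff.1 (X_dvd_logOneAddTrunc N), ← coeff_zero_eq_eval_zero, coeff_zero_expTrunc]
    simp
  · have hODE : (1 + X) * derivative (F - (1 + X)) - (F - (1 + X)) =
        -(C (N ! : ℚ)⁻¹ * L ^ N) - (-X) ^ N * (F - C (N ! : ℚ)⁻¹ * L ^ N) := by
      rw [derivative_sub, derivative_add, derivative_one, derivative_X]
      linear_combination hF
    rw [hODE, neg_pow]
    exact dvd_sub ((pow_dvd_pow_of_dvd (X_dvd_logOneAddTrunc N) N).mul_left _).neg_right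
      ((dvd_mul_left _ _).mul_right _)

end Polynomial

section Nilpotent

variable {A : Type*} [Ring A] [Algebra ℚ A] {a : A} {N : ℕ}

theorem IsNilpotent.exp_eq_aeval_expTrunc (h : a ^ (N + 1) = 0) :
    IsNilpotent.exp a = aeval a (expTrunc N) := by
  simp [IsNilpotent.exp_eq_sum h, expTrunc, Algebra.smul_def]

theorem aeval_logOneAddTrunc_pow_eq_zero (h : a ^ (N + 1) = 0) :
    aeval a (logOneAddTrunc N) ^ (N + 1) = 0 := by
  obtain ⟨q, hq⟩ := X_dvd_logOneAddTrunc N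
  have hc : Commute a (aeval a q) := by simpa using (Commute.all X q).map (aeval a)
  rw [hq, map_mul, aeval_X, hc.mul_pow, h, zero_mul]

theorem IsNilpotent.exp_aeval_logOneAddTrunc (h : a ^ (N + 1) = 0) :
    IsNilpotent.exp (aeval a (logOneAddTrunc N)) = 1 + a := by
  obtain ⟨s, hs⟩ := X_pow_succ_dvd_expTrunc_comp_logOneAddTrunc_sub N
  rw [IsNilpotent.exp_eq_aeval_expTrunc (aeval_logOneAddTrunc_pow_eq_zero h), ← aeval_comp,
    sub_eq_iff_eq_add.1 hs, map_add, map_mul, map_pow, aeval_X, h, zero_mul, zero_add, map_add,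
    map_one, aeval_X]

theorem IsNilpotent.normedSpace_exp_eq {𝔸 : Type*} [Ring 𝔸] [Algebra ℚ 𝔸]
    [TopologicalSpace 𝔸] [IsTopologicalRing 𝔸] [T2Space 𝔸] {x : 𝔸} (hx : IsNilpotent x) :
    NormedSpace.exp x = IsNilpotent.exp x := by
  obtain ⟨k, hk⟩ := hx
  rw [NormedSpace.exp_eq_tsum_rat, IsNilpotent.exp_eq_sum hk]
  exact tsum_eq_sum fun i hi => by rw [pow_eq_zero_of_le (by simpa using hi) hk, smul_zero]

end Nilpotent

namespace Matrix

theorem exp_smul_one_add_s5 {m : Type*} [Fintype m] [DecidableEq m] (μ : ℝ) (N : Matrix m m ℝ) :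
    exp (μ • 1 + N) = Real.exp μ • exp N := by
  rw [exp_add_of_commute _ _ ((Commute.one_left N).smul_left μ), smul_one_eq_diagonal,
    exp_diagonal, Pi.exp_def, ← Real.exp_eq_exp_ℝ, ← smul_one_eq_diagonal, smul_one_mul]

variable {m R : Type*} [LinearOrder m]

def IsStrictLowerTriangular [Zero R] (N : Matrix m m R) : Prop :=
  ∀ ⦃i j⦄, i ≤ j → N i j = 0

namespace IsStrictLowerTriangular

variable {N : Matrix m m R}

theorem isLowerTriangular [Zero R] (hN : N.IsStrictLowerTriangular) : N.IsLowerTriangular :=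
  fun _ _ h => hN (le_of_lt h)

theorem smul {S : Type*} [Zero R] [SMulZeroClass S R] (hN : N.IsStrictLowerTriangular) (c : S) :
    (c • N).IsStrictLowerTriangular :=
  fun i j h => by rw [smul_apply, hN h, smul_zero]

theorem mul_isLowerTriangular [Fintype m] [NonUnitalNonAssocSemiring R]
    (hN : N.IsStrictLowerTriangular) {M : Matrix m m R} (hM : M.IsLowerTriangular) :
    (N * M).IsStrictLowerTriangular := by
  intro i j hij
  rw [mul_apply]
  refine Finset.sum_eq_zero fun k _ => ?_
  rcases le_or_gt i k with hik | hki
  · rw [hN hik, zero_mul]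
  · rw [hM (show k < j from hki.trans_le hij), mul_zero]

theorem pow_card_eq_zero [Fintype m] [DecidableEq m] [CommRing R]
    (hN : N.IsStrictLowerTriangular) : N ^ Fintype.card m = 0 := by
  have hchar : N.charpoly = X ^ Fintype.card m := by
    rw [← charpoly_transpose, charpoly_of_isUpperTriangular Nᵀ fun i j h => hN (le_of_lt h)]
    simp [transpose_apply, hN le_rfl]
  simpa [hchar] using aeval_self_charpoly N

theorem aeval [Fintype m] [DecidableEq m] [CommRing R] [Algebra ℚ R]
    (hN : N.IsStrictLowerTriangular) {p : ℚ[X]} (hp : X ∣ p) :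
    (Polynomial.aeval N p).IsStrictLowerTriangular := by
  obtain ⟨q, rfl⟩ := hp
  rw [map_mul, aeval_X]
  have hq : Polynomial.aeval N q ∈ blockTriangularSubalgebra ℚ R OrderDual.toDual :=
    Algebra.adjoin_le (Set.singleton_subset_iff.2 hN.isLowerTriangular)
      (aeval_mem_adjoin_singleton ℚ N)
  exact hN.mul_isLowerTriangular hq

theorem exp_sub_one [Fintype m] [DecidableEq m] [CommRing R] [Algebra ℚ R] [TopologicalSpace R]
    [IsTopologicalRing R] [T2Space R] (hN : N.IsStrictLowerTriangular) :
    (exp N - 1).IsStrictLowerTriangular := by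
  have hpow : N ^ (Fintype.card m + 1) = 0 := pow_eq_zero_of_le (Nat.le_succ _) hN.pow_card_eq_zero
  rw [IsNilpotent.normedSpace_exp_eq ⟨_, hpow⟩, IsNilpotent.exp_eq_aeval_expTrunc hpow,
    ← map_one (Polynomial.aeval (R := ℚ) N), ← map_sub]
  exact hN.aeval (X_dvd_iff.2 (by simp [coeff_zero_expTrunc]))

theorem exp_smul_one_add_sub [Fintype m] [DecidableEq m] {N : Matrix m m ℝ}
    (hN : N.IsStrictLowerTriangular) (μ : ℝ) :
    (exp (μ • 1 + N) - Real.exp μ • 1).IsStrictLowerTriangular := by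
  rw [exp_smul_one_add_s5, ← smul_sub]
  exact hN.exp_sub_one.smul _

theorem exists_exp_eq_smul_one_add [Fintype m] [DecidableEq m] {N : Matrix m m ℝ}
    (hN : N.IsStrictLowerTriangular) {μ : ℝ} (hμ : 0 < μ) :
    ∃ L : Matrix m m ℝ, L.IsStrictLowerTriangular ∧
      exp (Real.log μ • 1 + L) = μ • 1 + N := by
  have hM := hN.smul μ⁻¹
  have hpow : (μ⁻¹ • N) ^ (Fintype.card m + 1) = 0 :=
    pow_eq_zero_of_le (Nat.le_succ _) hM.pow_card_eq_zero
  refine ⟨_, hM.aeval (X_dvd_logOneAddTrunc (Fintype.card m)), ?_⟩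
  rw [exp_smul_one_add_s5, Real.exp_log hμ,
    IsNilpotent.normedSpace_exp_eq ⟨_, aeval_logOneAddTrunc_pow_eq_zero hpow⟩,
    IsNilpotent.exp_aeval_logOneAddTrunc hpow, smul_add, smul_smul, mul_inv_cancel₀ hμ.ne',
    one_smul]

end IsStrictLowerTriangular

theorem isStrictLowerTriangular_sub_smul_one_iff {n : ℕ} [Ring R]
    {A : Matrix (Fin n) (Fin n) R} {μ : R} :
    (A - μ • 1).IsStrictLowerTriangular ↔ LowerTriConstDiag A ∧ ∀ i, A i i = μ := by
  constructor
  · intro h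
    have hdiag : ∀ i, A i i = μ := fun i => by simpa [sub_eq_zero] using h (le_refl i)
    exact ⟨⟨fun i j hij => by simpa [hij.ne] using h hij.le,
      fun i j => (hdiag i).trans (hdiag j).symm⟩, hdiag⟩
  · rintro ⟨⟨hlow, -⟩, hdiag⟩ i j hij
    rcases hij.eq_or_lt with rfl | hij
    · simp [hdiag]
    · simp [hlow i j hij, hij.ne]

end Matrix

/-- Appendix (i): `exp(𝕋_n(ℝ)) = 𝕋_n⁺(ℝ)`, the lower triangular matrices with constant
strictly positive diagonal. -/
theorem exp_image_lowerTri_real (n : ℕ) :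
    exp '' {A : Matrix (Fin n) (Fin n) ℝ | LowerTriConstDiag A} =
      {A : Matrix (Fin n) (Fin n) ℝ | LowerTriConstDiag A ∧ ∀ i, 0 < A i i} := by
  rcases isEmpty_or_nonempty (Fin n) with hn | ⟨⟨i₀⟩⟩
  · ext B
    exact ⟨fun _ => ⟨⟨isEmptyElim, isEmptyElim⟩, isEmptyElim⟩,
      fun _ => ⟨0, ⟨isEmptyElim, isEmptyElim⟩, Subsingleton.elim _ _⟩⟩
  ext B
  constructor
  · rintro ⟨A, hA, rfl⟩
    have hN := Matrix.isStrictLowerTriangular_sub_smul_one_iff.2 ⟨hA, fun i => hA.2 i i₀⟩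
    have hexp := hN.exp_smul_one_add_sub (A i₀ i₀)
    rw [add_sub_cancel] at hexp
    obtain ⟨hexpA, hdiag⟩ := Matrix.isStrictLowerTriangular_sub_smul_one_iff.1 hexp
    exact ⟨hexpA, fun i => hdiag i ▸ Real.exp_pos _⟩
  · rintro ⟨hB, hpos⟩
    obtain ⟨L, hL, hexp⟩ := (Matrix.isStrictLowerTriangular_sub_smul_one_iff.2
      ⟨hB, fun i => hB.2 i i₀⟩).exists_exp_eq_smul_one_add (hpos i₀)
    refine ⟨Real.log (B i₀ i₀) • 1 + L, ?_, by rw [hexp, add_sub_cancel]⟩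
    exact (Matrix.isStrictLowerTriangular_sub_smul_one_iff.1 (by rwa [add_sub_cancel_left])).1
end

section
/- Let G be an abelian subgroup of GL(n, K) (K = ℝ or ℂ) in which every element has a unique eigenvalue. Then there exists Q ∈ GL(n, K) such that Q⁻¹GQ is contained in 𝕋_n^*(K), the group of invertible lower triangular matrices with constant diagonal. -/
open Polynomial

/-!
Write each `A ∈ G` as `μ_A + N_A`; by Cayley–Hamilton `N_A` is nilpotent, and the `N_A` commute.
For a commuting family of nilpotent endomorphisms, every proper common invariant subspace `U`
contains the image of some `v ∉ U` under all of them: take a minimal invariant subspace strictly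
above `U`. Adding such vectors one at a time gives a basis in which every `N_A` is strictly lower
triangular, so every `A` becomes lower triangular with constant diagonal `μ_A`, and `μ_A ≠ 0`
because `A` is invertible.
-/

open Module Submodule Set

namespace Module.End

variable {K V : Type*} [Field K] [AddCommGroup V] [Module K V]

theorem exists_mem_notMem_apply_mem_of_isNilpotent {f : End K V} (hf : IsNilpotent f)
    {U W : Submodule K V} (hW : W ≤ W.comap f) (hWU : ¬ W ≤ U) :
    ∃ v ∈ W, v ∉ U ∧ f v ∈ U := by
  obtain ⟨m, hm⟩ := hf
  obtain ⟨w, hwW, hwU⟩ := SetLike.not_le_iff_exists.mp hWU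
  have hfmw : (f ^ m) w ∈ U := by simp [hm]
  clear hm
  induction m generalizing w with
  | zero => exact absurd hfmw hwU
  | succ m ih =>
    by_cases hfw : f w ∈ U
    · exact ⟨w, hwW, hwU, hfw⟩
    · exact ih (f w) (hW hwW) hfw (by rwa [pow_succ, mul_apply] at hfmw)

variable {ι : Type*} {f : ι → End K V}

theorem exists_notMem_forall_apply_mem [FiniteDimensional K V]
    (hcomm : ∀ i j, Commute (f i) (f j)) (hnil : ∀ i, IsNilpotent (f i))
    {U : Submodule K V} (hU : ∀ i, U ≤ U.comap (f i)) (hUtop : U ≠ ⊤) :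
    ∃ v ∉ U, ∀ i, f i v ∈ U := by
  obtain ⟨W, ⟨hUW, hWinv⟩, hWmin⟩ := wellFounded_lt.has_min
    {W : Submodule K V | U < W ∧ ∀ i, W ≤ W.comap (f i)} ⟨⊤, hUtop.lt_top, fun _ => le_top⟩
  -- Otherwise `W ⊓ U.comap (f i)` would be a smaller invariant subspace, still strictly above `U`
  -- by nilpotency of `f i`.
  have hWU : ∀ i, W ≤ U.comap (f i) := by
    intro i
    by_contra hWi
    obtain ⟨v, hvW, hvU, hfv⟩ :=
      exists_mem_notMem_apply_mem_of_isNilpotent (hnil i) (hWinv i) (not_le_of_gt hUW)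
    refine hWmin (W ⊓ U.comap (f i)) ⟨?_, fun j x ⟨hxW, hfx⟩ => ⟨hWinv j hxW, ?_⟩⟩
      (inf_lt_left.mpr hWi)
    · exact lt_of_le_of_ne (le_inf hUW.le (hU i)) fun h => hvU (h ▸ ⟨hvW, hfv⟩)
    · change f i (f j x) ∈ U
      rw [← mul_apply, (hcomm i j).eq, mul_apply]
      exact hU j hfx
  obtain ⟨v, hvW, hvU⟩ := SetLike.exists_of_lt hUW
  exact ⟨v, hvU, fun i => hWU i hvW⟩

theorem exists_linearIndependent_forall_apply_mem_span [FiniteDimensional K V]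
    (hcomm : ∀ i j, Commute (f i) (f j)) (hnil : ∀ i, IsNilpotent (f i))
    {k : ℕ} (hk : k ≤ finrank K V) :
    ∃ v : Fin k → V, LinearIndependent K v ∧ ∀ i j, f i (v j) ∈ span K (v '' Ioi j) := by
  induction k with
  | zero => exact ⟨Fin.elim0, linearIndependent_empty_type, fun _ j => j.elim0⟩
  | succ k ih =>
    obtain ⟨v, hv, hfv⟩ := ih (by omega)
    have hinv : ∀ i, span K (range v) ≤ (span K (range v)).comap (f i) := by
      refine fun i => span_le.mpr ?_
      rintro _ ⟨j, rfl⟩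
      exact span_mono (image_subset_range _ _) (hfv i j)
    have hne : span K (range v) ≠ ⊤ := by
      intro h
      have := (finrank_span_eq_card hv).symm.trans (h ▸ finrank_top K V)
      simp only [Fintype.card_fin] at this
      omega
    obtain ⟨x, hx, hfx⟩ := exists_notMem_forall_apply_mem hcomm hnil hinv hne
    refine ⟨Fin.cons x v, hv.finCons hx, fun i j => ?_⟩
    refine Fin.cases ?_ (fun j => ?_) j
    · refine span_mono ?_ (by simpa using hfx i)
      rintro _ ⟨j, rfl⟩
      exact ⟨j.succ, Fin.succ_pos j, by simp⟩
    · refine span_mono ?_ (by simpa using hfv i j)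
      rintro _ ⟨l, hl, rfl⟩
      exact ⟨l.succ, Fin.succ_lt_succ_iff.mpr hl, by simp⟩

theorem exists_basis_forall_apply_mem_span [FiniteDimensional K V]
    (hcomm : ∀ i j, Commute (f i) (f j)) (hnil : ∀ i, IsNilpotent (f i))
    {n : ℕ} (hn : finrank K V = n) :
    ∃ b : Basis (Fin n) K V, ∀ i j, f i (b j) ∈ span K (b '' Ioi j) := by
  obtain ⟨v, hv, hfv⟩ := exists_linearIndependent_forall_apply_mem_span hcomm hnil hn.ge
  refine ⟨basisOfLinearIndependentOfCardEqFinrank' v hv (by simp [hn]), ?_⟩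
  simpa using hfv

end Module.End

section Matrix

variable {K V : Type*} [Field K] [AddCommGroup V] [Module K V]

theorem Matrix.isNilpotent_sub_algebraMap_of_charpoly_eq {m R : Type*} [Fintype m]
    [DecidableEq m] [CommRing R] {A : Matrix m m R} {μ : R} {k : ℕ}
    (h : A.charpoly = (X - C μ) ^ k) : IsNilpotent (A - algebraMap R _ μ) :=
  ⟨k, by simpa [h] using A.aeval_self_charpoly⟩

theorem Matrix.IsLowerTriangular.apply_ne_zero_of_isUnit {m : Type*} [Fintype m] [DecidableEq m]
    [LinearOrder m] {M : Matrix m m K} (hM : M.IsLowerTriangular) (hu : IsUnit M) (i : m) :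
    M i i ≠ 0 := by
  have hdet := (M.isUnit_iff_isUnit_det.mp hu).ne_zero
  rw [det_of_isLowerTriangular M hM] at hdet
  exact Finset.prod_ne_zero_iff.mp hdet i (Finset.mem_univ i)

theorem LowerTriConstDiag.isLowerTriangular {R : Type*} [Semiring R] {n : ℕ}
    {M : Matrix (Fin n) (Fin n) R}
    (hM : LowerTriConstDiag M) : M.IsLowerTriangular :=
  fun i j hij => hM.1 i j hij

theorem Module.Basis.exists_conj_eq_toMatrix_toLin' {m : Type*} [Fintype m] [DecidableEq m]
    (b : Basis m K (m → K)) :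
    ∃ Q : GL m K, ∀ M : Matrix m m K,
      ((Q⁻¹ : GL m K) : Matrix m m K) * M * Q = LinearMap.toMatrix b b (Matrix.toLin' M) := by
  let e := Pi.basisFun K m
  refine ⟨⟨e.toMatrix b, b.toMatrix e, e.toMatrix_mul_toMatrix_flip b,
    b.toMatrix_mul_toMatrix_flip e⟩, fun M => ?_⟩
  have h := basis_toMatrix_mul_linearMap_toMatrix_mul_basis_toMatrix b e b e (Matrix.toLin' M)
  rwa [LinearMap.toMatrix_eq_toMatrix', LinearMap.toMatrix'_toLin'] at h

theorem LinearMap.toMatrix_apply_eq_zero_of_apply_mem_span {n : ℕ} (b : Basis (Fin n) K V)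
    {g : Module.End K V} {i j : Fin n} (hg : g (b j) ∈ span K (b '' Ioi j)) (hij : ¬ j < i) :
    LinearMap.toMatrix b b g i j = 0 := by
  rw [LinearMap.toMatrix_apply]
  by_contra h
  exact hij (b.mem_span_image.mp hg (Finsupp.mem_support_iff.mpr h))

theorem lowerTriConstDiag_toMatrix_algebraMap_add {n : ℕ} (b : Basis (Fin n) K V)
    {g : Module.End K V} (hg : ∀ j, g (b j) ∈ span K (b '' Ioi j)) (μ : K) :
    LowerTriConstDiag (LinearMap.toMatrix b b (algebraMap K _ μ + g)) := by
  have hentry : ∀ i j, LinearMap.toMatrix b b (algebraMap K _ μ + g) i j =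
      (if i = j then μ else 0) + LinearMap.toMatrix b b g i j := by
    intro i j
    simp [Module.algebraMap_end_eq_smul_id, Matrix.one_apply]
  have hdiag : ∀ i, LinearMap.toMatrix b b (algebraMap K _ μ + g) i i = μ := fun i => by
    simp [hentry, LinearMap.toMatrix_apply_eq_zero_of_apply_mem_span b (hg i) (lt_irrefl i)]
  refine ⟨fun i j hij => ?_, fun i j => by rw [hdiag, hdiag]⟩
  rw [hentry, if_neg hij.ne,
    LinearMap.toMatrix_apply_eq_zero_of_apply_mem_span b (hg j) (lt_asymm hij), add_zero]

end Matrix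

/-- Lemma 2.2: an abelian subgroup of `GL(n, 𝕂)` (𝕂 = ℝ or ℂ) all of whose elements have a
unique eigenvalue is simultaneously conjugate into `𝕋_n^*(𝕂)`. -/
theorem abelian_unique_eigenvalue_triangularizable
    {𝕂 : Type*} [RCLike 𝕂] (n : ℕ)
    (G : Subgroup (Matrix.GeneralLinearGroup (Fin n) 𝕂))
    (hab : ∀ A ∈ G, ∀ B ∈ G, A * B = B * A)
    (heig : ∀ A ∈ G, ∃ μ : 𝕂,
      (A : Matrix (Fin n) (Fin n) 𝕂).charpoly = (X - C μ) ^ n) :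
    ∃ Q : Matrix.GeneralLinearGroup (Fin n) 𝕂, ∀ A ∈ G,
      LowerTriConstDiag ((Q⁻¹ * A * Q : Matrix.GeneralLinearGroup (Fin n) 𝕂) :
        Matrix (Fin n) (Fin n) 𝕂) ∧
      ∀ i, ((Q⁻¹ * A * Q : Matrix.GeneralLinearGroup (Fin n) 𝕂) :
        Matrix (Fin n) (Fin n) 𝕂) i i ≠ 0 := by
  choose μ hμ using heig
  let N : G → Matrix (Fin n) (Fin n) 𝕂 := fun A => A.1 - algebraMap 𝕂 _ (μ A A.2)
  have hcomm : ∀ A B, Commute (Matrix.toLinAlgEquiv' (N A)) (Matrix.toLinAlgEquiv' (N B)) :=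
    fun A B => (((Commute.units_val (hab A A.2 B B.2)).sub_right
      (Algebra.commute_algebraMap_right _ _)).sub_left (Algebra.commute_algebraMap_left _ _)).map _
  have hnil : ∀ A, IsNilpotent (Matrix.toLinAlgEquiv' (N A)) := fun A =>
    (Matrix.isNilpotent_sub_algebraMap_of_charpoly_eq (hμ A A.2)).map _
  obtain ⟨b, hb⟩ := Module.End.exists_basis_forall_apply_mem_span hcomm hnil
    (Module.finrank_fin_fun 𝕂)
  obtain ⟨Q, hQ⟩ := b.exists_conj_eq_toMatrix_toLin'
  refine ⟨Q, fun A hA => ?_⟩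
  have hconj : ((Q⁻¹ * A * Q : Matrix.GeneralLinearGroup (Fin n) 𝕂) : Matrix (Fin n) (Fin n) 𝕂)
      = LinearMap.toMatrix b b (algebraMap 𝕂 _ (μ A hA) + Matrix.toLinAlgEquiv' (N ⟨A, hA⟩)) := by
    rw [Units.val_mul, Units.val_mul, hQ, ← AlgEquiv.commutes Matrix.toLinAlgEquiv', ← map_add]
    simp only [N, add_sub_cancel]
    rfl
  have htri := lowerTriConstDiag_toMatrix_algebraMap_add b (hb ⟨A, hA⟩) (μ A hA)
  rw [← hconj] at htri
  exact ⟨htri, htri.isLowerTriangular.apply_ne_zero_of_isUnit (Q⁻¹ * A * Q).isUnit⟩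
end

section
/- Let 𝕊 be the set of real 2×2 matrices of the form [[α, β],[−β, α]], and 𝔹_m(ℝ) the set of real 2m×2m block lower triangular matrices with m×m blocks from 𝕊 and constant diagonal block C ∈ 𝕊. For u_k = (e_{2k−1} − i e_{2k})/2, the list (u_1,…,u_m, ū_1,…,ū_m) is a basis of ℂ^{2m}, and in this basis every B ∈ 𝔹_m(ℝ) is conjugate (by the change of basis matrix Q) to diag(B'_1, conj(B'_1)) with B'_1 ∈ 𝕋_m(ℂ). -/
open NormedSpace

/-- Membership in `𝕊`: a real 2×2 matrix of the form `[[α, β], [-β, α]]`. -/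
def MemS (b : Matrix (Fin 2) (Fin 2) ℝ) : Prop :=
  b 0 0 = b 1 1 ∧ b 1 0 = -(b 0 1)

/-- The `(i,j)` 2×2 block of a `2m × 2m` real matrix indexed by `Fin m × Fin 2`. -/
def blk {m : ℕ} (B : Matrix (Fin m × Fin 2) (Fin m × Fin 2) ℝ) (i j : Fin m) :
    Matrix (Fin 2) (Fin 2) ℝ :=
  Matrix.of fun a b => B (i, a) (j, b)

/-- Membership in `𝔹_m(ℝ)`: block lower triangular with 2×2 blocks in `𝕊` and all diagonal
blocks equal. -/
def MemB {m : ℕ} (B : Matrix (Fin m × Fin 2) (Fin m × Fin 2) ℝ) : Prop :=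
  (∀ i j : Fin m, MemS (blk B i j)) ∧
  (∀ i j : Fin m, i < j → blk B i j = 0) ∧
  (∀ i j : Fin m, blk B i i = blk B j j)

/-- Lemma 2.3: with `u_k = (e_{2k-1} - i e_{2k})/2`, the family
`(u_1, …, u_m, ū_1, …, ū_m)` is a basis of `ℂ^{2m}`, and in this basis every
`B ∈ 𝔹_m(ℝ)` becomes `diag(B'_1, conj B'_1)` with `B'_1 ∈ 𝕋_m(ℂ)`
(expressed as `B·Q = Q·diag(B'_1, conj B'_1)` for the change of basis matrix `Q`). -/
theorem blockForm_conj_to_triangular (m : ℕ) :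
    let u : Fin m → (Fin m × Fin 2 → ℂ) := fun k p =>
      if p = (k, 0) then (1 / 2 : ℂ) else if p = (k, 1) then -(Complex.I / 2) else 0
    let v : (Fin m ⊕ Fin m) → (Fin m × Fin 2 → ℂ) :=
      Sum.elim u fun k p => (starRingEnd ℂ) (u k p)
    let Q : Matrix (Fin m × Fin 2) (Fin m ⊕ Fin m) ℂ := Matrix.of fun p j => v j p
    (LinearIndependent ℂ v ∧ Submodule.span ℂ (Set.range v) = ⊤) ∧
    ∀ B : Matrix (Fin m × Fin 2) (Fin m × Fin 2) ℝ, MemB B →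
      ∃ B1 : Matrix (Fin m) (Fin m) ℂ, LowerTriConstDiag B1 ∧
        (B.map (Complex.ofReal)) * Q =
          Q * Matrix.fromBlocks B1 0 0 (B1.map (starRingEnd ℂ)) := by
  intro u v Q
  have hli : LinearIndependent ℂ v := by
    rw [Fintype.linearIndependent_iff]
    intro g hg
    have key : ∀ k : Fin m, g (Sum.inl k) = 0 ∧ g (Sum.inr k) = 0 := by
      intro k
      have h0 := congrFun hg (k, 0)
      have h1 := congrFun hg (k, 1)
      simp [Fintype.sum_sum_type, Finset.sum_apply, v, u, apply_ite (starRingEnd ℂ),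
        mul_ite, Finset.sum_ite_eq, Prod.ext_iff] at h0 h1
      rw [Complex.conj_ofNat] at h0 h1
      constructor
      · linear_combination h0 + Complex.I * h1 +
          (g (Sum.inl k)/2 - g (Sum.inr k)/2) * Complex.I_sq
      · linear_combination h0 - Complex.I * h1 -
          (g (Sum.inl k)/2 - g (Sum.inr k)/2) * Complex.I_sq
    rintro (k | k)
    · exact (key k).1
    · exact (key k).2
  refine ⟨⟨hli, hli.span_eq_top_of_card_eq_finrank' ?_⟩, ?_⟩
  · simp [Module.finrank_pi]; ring
  · intro B hB
    refine ⟨Matrix.of fun l k => (B (l,0) (k,0) : ℂ) - Complex.I * (B (l,0) (k,1) : ℂ),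
      ⟨?_, ?_⟩, ?_⟩
    · intro i j hij
      have h := hB.2.1 i j hij
      have h0 := congrFun (congrFun h 0) 0
      have h1 := congrFun (congrFun h 0) 1
      simp [blk] at h0 h1
      simp [h0, h1]
    · intro i j
      have h := hB.2.2 i j
      have h0 := congrFun (congrFun h 0) 0
      have h1 := congrFun (congrFun h 0) 1
      simp [blk] at h0 h1
      simp [h0, h1]
    · have hA : ∀ i j : Fin m, B (i,1) (j,0) = -(B (i,0) (j,1)) := fun i j => (hB.1 i j).2
      have hD : ∀ i j : Fin m, B (i,1) (j,1) = B (i,0) (j,0) := fun i j => ((hB.1 i j).1).symm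
      ext ⟨l, a⟩ (k | k) <;> fin_cases a <;>
        simp [Matrix.mul_apply, Fintype.sum_prod_type, Fin.sum_univ_two,
          Fintype.sum_sum_type, Q, v, u, Prod.ext_iff, mul_ite, ite_mul,
          apply_ite (starRingEnd ℂ), Finset.sum_add_distrib,
          Finset.sum_ite_eq, Finset.sum_ite_eq', hA, hD, Complex.conj_I,
          Complex.conj_ofReal] <;>
        ring_nf <;> simp [Complex.I_sq] <;> ring
end

section
/- Let G be an abelian subgroup of the group 𝕋_n^*(K) of invertible lower triangular matrices with constant diagonal (K = ℝ or ℂ), and let g = exp⁻¹(G) ∩ 𝕋_n(K). Then g is an additive subgroup of 𝕋_n(K), and consequently for every vector v ∈ K^n, g_v = {Bv : B ∈ g} is an additive subgroup of K^n. -/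
open NormedSpace

/-!
Every `B ∈ 𝕋_n(K)` is `c • 1 + N` with `N` nilpotent, and `exp B = exp c • exp N`. If `y` commutes
with `exp N`, it commutes with `exp (k • N) = (exp N) ^ k` for every `k : ℕ`; but
`y * exp (k • N) - exp (k • N) * y` is a polynomial in `k` whose coefficient of `k` is
`y * N - N * y`, and a polynomial vanishing at every natural number is zero. So `y` commutes with
`N`, hence with `B`. Applied twice, this makes the exp-preimages in `𝕋_n(K)` of the commuting
elements of `G` commute, so `exp (B₁ + B₂) = exp B₁ * exp B₂ ∈ G`.
-/

open Finset Polynomial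

theorem eq_zero_of_forall_sum_natCast_pow_smul_eq_zero {K V : Type*} [Field K] [CharZero K]
    [AddCommGroup V] [Module K V] {m : ℕ} {c : ℕ → V}
    (h : ∀ k : ℕ, ∑ i ∈ range m, (k : K) ^ i • c i = 0) {j : ℕ} (hj : j < m) : c j = 0 := by
  refine (Module.forall_dual_apply_eq_zero_iff K (c j)).mp fun φ => ?_
  set p : K[X] := ∑ i ∈ range m, C (φ (c i)) * X ^ i
  have hroots : Set.range (Nat.cast : ℕ → K) ⊆ {x | p.IsRoot x} := by
    rintro _ ⟨k, rfl⟩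
    simpa only [Set.mem_ofPred_eq, IsRoot, p, eval_finsetSum, eval_mul, eval_C, eval_pow, eval_X,
      map_sum, map_smul, smul_eq_mul, mul_comm, map_zero] using congr(φ $(h k))
  have hp : p = 0 := p.eq_zero_of_infinite_isRoot
    ((Set.infinite_range_of_injective Nat.cast_injective).mono hroots)
  simpa [p, finsetSum_coeff, coeff_C_mul_X_pow, hj] using congr(coeff $hp j)

namespace IsNilpotent

variable {A : Type*} [Ring A] [Module ℚ A]

theorem exp_nsmul {x : A} (hx : IsNilpotent x) (k : ℕ) : exp (k • x) = exp x ^ k := by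
  induction k with
  | zero => simp
  | succ k ih =>
    rw [succ_nsmul, _root_.pow_succ, exp_add_of_commute ((Commute.refl x).smul_left k)
      (hx.smul k) hx, ih]

theorem commute_of_commute_exp {x y : A} (hx : IsNilpotent x) (h : Commute y (exp x)) :
    Commute y x := by
  obtain ⟨m, hm⟩ := hx
  have hm2 : x ^ (m + 2) = 0 := pow_eq_zero_of_le (by omega) hm
  set c : ℕ → A := fun i => (i.factorial : ℚ)⁻¹ • (y * x ^ i - x ^ i * y)
  have hsum : ∀ k : ℕ, ∑ i ∈ range (m + 2), (k : ℚ) ^ i • c i = 0 := by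
    intro k
    have hk : Commute y (exp (k • x)) := by
      rw [exp_nsmul ⟨m, hm⟩]
      exact h.pow_right k
    have hkm : (k • x) ^ (m + 2) = 0 := by rw [_root_.smul_pow, hm2, smul_zero]
    have hk' := hk.eq
    rw [exp_eq_sum hkm, ← sub_eq_zero, Finset.mul_sum, Finset.sum_mul,
      ← Finset.sum_sub_distrib] at hk'
    rw [← hk']
    refine Finset.sum_congr rfl fun i _ => ?_
    simp only [c, _root_.smul_pow, mul_smul_comm, smul_mul_assoc, ← smul_sub,
      smul_comm ((k : ℚ) ^ i)]
    rw [← Nat.cast_pow, Nat.cast_smul_eq_nsmul]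
  simpa [c, sub_eq_zero, Commute, SemiconjBy] using
    eq_zero_of_forall_sum_natCast_pow_smul_eq_zero hsum (j := 1) (by omega)

theorem exp_eq_normedSpace_exp {A : Type*} [Ring A] [Algebra ℚ A] [TopologicalSpace A]
    [IsTopologicalRing A] {x : A} (hx : IsNilpotent x) : exp x = NormedSpace.exp x := by
  obtain ⟨m, hm⟩ := hx
  rw [NormedSpace.exp_eq_tsum_rat, exp_eq_sum hm]
  exact (tsum_eq_sum fun i hi => by
    rw [pow_eq_zero_of_le (by simpa using hi) hm, smul_zero]).symm

end IsNilpotent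

namespace Matrix

variable {m : Type*} [Fintype m] [DecidableEq m]

theorem isNilpotent_of_isLowerTriangular [LinearOrder m] {R : Type*} [CommRing R]
    {M : Matrix m m R} (hM : M.IsLowerTriangular) (hdiag : ∀ i, M i i = 0) : IsNilpotent M := by
  have hchar : M.charpoly = X ^ Fintype.card m := by
    rw [← M.charpoly_transpose, charpoly_of_isUpperTriangular M.transpose fun _ _ h => hM h]
    simp [hdiag]
  exact ⟨Fintype.card m, by simpa [hchar] using M.aeval_self_charpoly⟩

theorem commute_of_commute_exp_of_isNilpotent_sub {𝕂 : Type*} [NormedField 𝕂]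
    [NormedAlgebra ℚ 𝕂] [CompleteSpace 𝕂] {y B : Matrix m m 𝕂} {c : 𝕂}
    (hB : IsNilpotent (B - c • 1)) (h : Commute y (exp B)) : Commute y B := by
  have hc : Commute y (c • 1) := (Commute.one_right y).smul_right c
  have hexp : exp (B - c • 1) = exp (-(c • 1)) * exp B := by
    rw [sub_eq_neg_add, exp_add_of_commute _ _ ((Commute.one_left B).smul_left c).neg_left]
  have hN : Commute y (IsNilpotent.exp (B - c • 1)) := by
    rw [hB.exp_eq_normedSpace_exp, hexp]
    exact hc.neg_right.exp_right.mul_right h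
  simpa using (hB.commute_of_commute_exp hN).add_right hc

end Matrix

namespace LowerTriConstDiag

variable {K : Type*} {n : ℕ}

theorem zero [Semiring K] : LowerTriConstDiag (0 : Matrix (Fin n) (Fin n) K) :=
  ⟨fun _ _ _ => rfl, fun _ _ => rfl⟩

theorem add [Semiring K] {A B : Matrix (Fin n) (Fin n) K} (hA : LowerTriConstDiag A)
    (hB : LowerTriConstDiag B) : LowerTriConstDiag (A + B) :=
  ⟨fun i j hij => by simp [hA.1 i j hij, hB.1 i j hij], fun i j => by simp [hA.2 i j, hB.2 i j]⟩

theorem neg [Ring K] {A : Matrix (Fin n) (Fin n) K} (hA : LowerTriConstDiag A) :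
    LowerTriConstDiag (-A) :=
  ⟨fun i j hij => by simp [hA.1 i j hij], fun i j => by simp [hA.2 i j]⟩

theorem exists_isNilpotent_sub_smul_one [CommRing K] {A : Matrix (Fin n) (Fin n) K}
    (hA : LowerTriConstDiag A) : ∃ c : K, IsNilpotent (A - c • 1) := by
  cases n with
  | zero => exact ⟨0, 1, Subsingleton.elim _ _⟩
  | succ n =>
    refine ⟨A 0 0, Matrix.isNilpotent_of_isLowerTriangular (fun i j hij => ?_) fun i => ?_⟩
    · simp [hA.1 i j hij, Matrix.one_apply_ne (show i < j from hij).ne]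
    · simp [hA.2 i 0]

theorem commute_of_commute_exp [NormedField K] [NormedAlgebra ℚ K] [CompleteSpace K]
    {A B : Matrix (Fin n) (Fin n) K} (hA : LowerTriConstDiag A) (hB : LowerTriConstDiag B)
    (h : Commute (exp A) (exp B)) : Commute A B := by
  obtain ⟨a, ha⟩ := hA.exists_isNilpotent_sub_smul_one
  obtain ⟨b, hb⟩ := hB.exists_isNilpotent_sub_smul_one
  exact Matrix.commute_of_commute_exp_of_isNilpotent_sub hb
    (Matrix.commute_of_commute_exp_of_isNilpotent_sub ha h.symm).symm

end LowerTriConstDiag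

def lowerTriConstDiagExpPreimage {K : Type*} [NormedField K] [NormedAlgebra ℚ K]
    [CompleteSpace K] {n : ℕ} (G : Subgroup (Matrix (Fin n) (Fin n) K)ˣ)
    (hG : ∀ A ∈ G, ∀ B ∈ G, A * B = B * A) : AddSubgroup (Matrix (Fin n) (Fin n) K) where
  carrier := {B | LowerTriConstDiag B ∧ ∃ A ∈ G, exp B = A}
  zero_mem' := ⟨.zero, 1, G.one_mem, by simp⟩
  add_mem' := by
    rintro B₁ B₂ ⟨hT₁, A₁, hA₁, hE₁⟩ ⟨hT₂, A₂, hA₂, hE₂⟩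
    have hcomm : Commute B₁ B₂ := hT₁.commute_of_commute_exp hT₂ <| by
      rw [hE₁, hE₂]
      exact Commute.units_val (hG A₁ hA₁ A₂ hA₂)
    exact ⟨hT₁.add hT₂, A₁ * A₂, G.mul_mem hA₁ hA₂, by
      rw [Matrix.exp_add_of_commute _ _ hcomm, hE₁, hE₂, Units.val_mul]⟩
  neg_mem' := by
    rintro B ⟨hT, A, hA, hE⟩
    exact ⟨hT.neg, A⁻¹, G.inv_mem hA, by rw [Matrix.exp_neg, hE, Matrix.coe_units_inv]⟩

theorem exp_preimage_addSubgroup_general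
    {𝕂 : Type*} [RCLike 𝕂] (n : ℕ)
    (G : Subgroup (Matrix (Fin n) (Fin n) 𝕂)ˣ)
    (hab : ∀ A ∈ G, ∀ B ∈ G, A * B = B * A) :
    (∃ H : AddSubgroup (Matrix (Fin n) (Fin n) 𝕂),
      (H : Set (Matrix (Fin n) (Fin n) 𝕂)) =
        {B | LowerTriConstDiag B ∧ ∃ A ∈ G, exp B =
          ((A : (Matrix (Fin n) (Fin n) 𝕂)ˣ) : Matrix (Fin n) (Fin n) 𝕂)}) ∧
    ∀ v : Fin n → 𝕂, ∃ Hv : AddSubgroup (Fin n → 𝕂),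
      (Hv : Set (Fin n → 𝕂)) =
        {x | ∃ B : Matrix (Fin n) (Fin n) 𝕂,
          (LowerTriConstDiag B ∧ ∃ A ∈ G, exp B =
            ((A : (Matrix (Fin n) (Fin n) 𝕂)ˣ) : Matrix (Fin n) (Fin n) 𝕂)) ∧
          x = B.mulVec v} := by
  refine ⟨⟨lowerTriConstDiagExpPreimage G hab, rfl⟩, fun v =>
    ⟨(lowerTriConstDiagExpPreimage G hab).map (Matrix.mulVec.addMonoidHomLeft v), ?_⟩⟩
  ext x
  simp [lowerTriConstDiagExpPreimage, eq_comm, Matrix.mulVec.addMonoidHomLeft]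

/-- Lemma 3.9: if `G` is an abelian subgroup of `𝕋_n^*(𝕂)` (𝕂 = ℝ or ℂ), then
`g = exp⁻¹(G) ∩ 𝕋_n(𝕂)` is an additive subgroup of `𝕋_n(𝕂)`; in particular, for every
`v ∈ 𝕂^n` the set `g_v = {B v : B ∈ g}` is an additive subgroup of `𝕂^n`. -/
theorem exp_preimage_addSubgroup
    {𝕂 : Type*} [RCLike 𝕂] (n : ℕ)
    (G : Subgroup (Matrix (Fin n) (Fin n) 𝕂)ˣ)
    (hT : ∀ A ∈ G, LowerTriConstDiag ((A : (Matrix (Fin n) (Fin n) 𝕂)ˣ) :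
      Matrix (Fin n) (Fin n) 𝕂))
    (hab : ∀ A ∈ G, ∀ B ∈ G, A * B = B * A) :
    (∃ H : AddSubgroup (Matrix (Fin n) (Fin n) 𝕂),
      (H : Set (Matrix (Fin n) (Fin n) 𝕂)) =
        {B | LowerTriConstDiag B ∧ ∃ A ∈ G, exp B =
          ((A : (Matrix (Fin n) (Fin n) 𝕂)ˣ) : Matrix (Fin n) (Fin n) 𝕂)}) ∧
    ∀ v : Fin n → 𝕂, ∃ Hv : AddSubgroup (Fin n → 𝕂),
      (Hv : Set (Fin n → 𝕂)) =
        {x | ∃ B : Matrix (Fin n) (Fin n) 𝕂,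
          (LowerTriConstDiag B ∧ ∃ A ∈ G, exp B =
            ((A : (Matrix (Fin n) (Fin n) 𝕂)ˣ) : Matrix (Fin n) (Fin n) 𝕂)) ∧
          x = B.mulVec v} :=
  exp_preimage_addSubgroup_general n G hab
end

section
/- Let G be an abelian subgroup of 𝕋_n^*(K) and let F_G be the linear span of the vectors (B − μ_B I) e_i for B ∈ G and 1 ≤ i ≤ n−1, where μ_B is the unique eigenvalue of B. Then for every u ∈ K^n, the subspace spanned by u together with F_G is invariant under every element of G. -/
/-- Lemma 5.1: let `G` be an abelian subgroup of `𝕋_n^*(𝕂)` and let `F_G` be the span of the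
vectors `(B - μ_B I) e_i` for `B ∈ G`, `1 ≤ i ≤ n - 1` (`μ_B` the common diagonal entry of
`B`).  Then for every `u ∈ 𝕂^n` the subspace `H_u` spanned by `u` together with `F_G` is
invariant under every element of `G`. -/
theorem span_insert_FG_invariant
    {𝕂 : Type*} [RCLike 𝕂] (n : ℕ) (G : Set (Matrix (Fin n) (Fin n) 𝕂))
    (hT : ∀ A ∈ G, LowerTriConstDiag A ∧ ∀ i, A i i ≠ 0)
    (hone : (1 : Matrix (Fin n) (Fin n) 𝕂) ∈ G)
    (hmul : ∀ A ∈ G, ∀ B ∈ G, A * B ∈ G)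
    (hinv : ∀ A ∈ G, ∃ B ∈ G, A * B = 1)
    (hab : ∀ A ∈ G, ∀ B ∈ G, A * B = B * A)
    (u : Fin n → 𝕂) :
    ∀ A ∈ G, ∀ x ∈ Submodule.span 𝕂 ({u} ∪
      {w | ∃ B ∈ G, ∃ i : Fin n, (i : ℕ) < n - 1 ∧
        w = (B - B i i • (1 : Matrix (Fin n) (Fin n) 𝕂)).mulVec (Pi.single i 1)}),
      A.mulVec x ∈ Submodule.span 𝕂 ({u} ∪
        {w | ∃ B ∈ G, ∃ i : Fin n, (i : ℕ) < n - 1 ∧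
          w = (B - B i i • (1 : Matrix (Fin n) (Fin n) 𝕂)).mulVec (Pi.single i 1)}) := by

  intro A hA x hx
  rcases Nat.eq_zero_or_pos n with hn | hn
  · subst hn
    have h0 : A.mulVec x = 0 := Subsingleton.elim _ _
    rw [h0]; exact Submodule.zero_mem _
  · set μ := A ⟨0, hn⟩ ⟨0, hn⟩ with hμ
    have hμi : ∀ i : Fin n, A i i = μ := fun i => (hT A hA).1.2 i ⟨0, hn⟩
    have hsplit : A.mulVec x = μ • x + (A - μ • 1).mulVec x := by
      rw [Matrix.sub_mulVec, Matrix.smul_mulVec, Matrix.one_mulVec]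
      abel
    rw [hsplit]
    refine Submodule.add_mem _ (Submodule.smul_mem _ _ hx) ?_
    have hdecomp : (A - μ • 1).mulVec x
        = ∑ i : Fin n, x i • (A - μ • 1).mulVec (Pi.single i 1) := by
      funext j
      simp [Matrix.mulVec_single, Finset.sum_apply, Matrix.mulVec, dotProduct, mul_comm]
    rw [hdecomp]
    refine Submodule.sum_mem _ fun i _ => Submodule.smul_mem _ _ ?_
    by_cases hi : (i : ℕ) < n - 1
    · apply Submodule.subset_span
      right
      exact ⟨A, hA, i, hi, by rw [hμi i]⟩
    · have hin : (i : ℕ) = n - 1 := le_antisymm (Nat.lt_succ_iff.mp (by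
        have := i.isLt; omega)) (le_of_not_gt hi)
      have hz : (A - μ • 1).mulVec (Pi.single i 1) = 0 := by
        funext j
        have hj : j = i ∨ j < i := by
          rcases lt_or_eq_of_le (show (j : ℕ) ≤ (i : ℕ) by have := j.isLt; omega) with h | h
          · exact Or.inr (Fin.lt_def.mpr h)
          · exact Or.inl (Fin.ext h)
        rcases hj with h | h
        · subst h
          simp [Matrix.mulVec_single, Matrix.sub_apply, Matrix.smul_apply, Matrix.one_apply,
            hμi j]
        · have hzero : A j i = 0 := (hT A hA).1.1 j i h
          simp [Matrix.mulVec_single, Matrix.sub_apply, Matrix.smul_apply, Matrix.one_apply,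
            hzero, (ne_of_lt h).symm, Fin.ne_of_lt h]
      rw [hz]; exact Submodule.zero_mem _
end

section
/- If G is a finitely generated abelian subgroup of SL(2, ℝ), then G is not topologically transitive: no orbit G(v) = {Av : A ∈ G} is dense in ℝ². -/
/-- A continuous real function that is constant on a dense set is constant. -/
lemma dense_const_aux {f : (Fin 2 → ℝ) → ℝ} (hf : Continuous f)
    {S : Set (Fin 2 → ℝ)} (hd : Dense S) {c : ℝ} (hS : ∀ x ∈ S, f x = c) :
    ∀ z, f z = c := by
  have h1 : Dense {x | f x = c} := hd.mono hS
  have h2 : IsClosed {x : Fin 2 → ℝ | f x = c} := isClosed_eq hf continuous_const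
  have h3 : {x : Fin 2 → ℝ | f x = c} = Set.univ := by
    rw [← h2.closure_eq, h1.closure_eq]
  exact fun z => (Set.eq_univ_iff_forall.mp h3) z

/-- The quadratic form `w ↦ det [w | Aw]` is invariant under any determinant-one matrix
commuting with `A`. -/
lemma Q_invariant (A B : Matrix (Fin 2) (Fin 2) ℝ) (hc : A * B = B * A)
    (hB : B.det = 1) (w : Fin 2 → ℝ) :
    Matrix.det (Matrix.of ![B.mulVec w, A.mulVec (B.mulVec w)])
      = Matrix.det (Matrix.of ![w, A.mulVec w]) := by
  have h2 : A.mulVec (B.mulVec w) = B.mulVec (A.mulVec w) := by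
    rw [Matrix.mulVec_mulVec, Matrix.mulVec_mulVec, hc]
  have h : Matrix.of ![B.mulVec w, A.mulVec (B.mulVec w)]
      = Matrix.of ![w, A.mulVec w] * B.transpose := by
    rw [h2]
    ext i j
    fin_cases i <;> fin_cases j <;>
      simp [Matrix.mul_apply, Matrix.mulVec, dotProduct, Fin.sum_univ_two,
        Matrix.transpose_apply] <;> ring
  rw [h, Matrix.det_mul, Matrix.det_transpose, hB, mul_one]

/-- Corollary 9.8: a finitely generated abelian subgroup of `SL(2, ℝ)` is not topologically
transitive: no orbit of its linear action on `ℝ²` is dense. -/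
theorem sl2_fg_abelian_not_transitive
    (G : Subgroup (Matrix.SpecialLinearGroup (Fin 2) ℝ))
    (hfg : G.FG)
    (hab : ∀ A ∈ G, ∀ B ∈ G, A * B = B * A) :
    ¬ ∃ v : Fin 2 → ℝ,
      Dense {x : Fin 2 → ℝ | ∃ A ∈ G, x = (A : Matrix (Fin 2) (Fin 2) ℝ).mulVec v} := by
  rintro ⟨v, hd⟩
  by_cases hA : ∃ A ∈ G, (A : Matrix (Fin 2) (Fin 2) ℝ) ≠ 1 ∧
      (A : Matrix (Fin 2) (Fin 2) ℝ) ≠ -1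
  · -- there is a non-scalar element A; use the invariant quadratic form
    obtain ⟨A, hAG, hA1, hA2⟩ := hA
    set M : Matrix (Fin 2) (Fin 2) ℝ := (A : Matrix (Fin 2) (Fin 2) ℝ) with hM
    set f : (Fin 2 → ℝ) → ℝ :=
      fun w => Matrix.det (Matrix.of ![w, M.mulVec w]) with hf_def
    have hf_eq : ∀ w, f w = w 0 * (M 1 0 * w 0 + M 1 1 * w 1)
        - w 1 * (M 0 0 * w 0 + M 0 1 * w 1) := by
      intro w
      simp [hf_def, Matrix.det_fin_two, Matrix.mulVec, dotProduct,
        Fin.sum_univ_two]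
    have hf : Continuous f := by
      have : f = fun w : Fin 2 → ℝ => w 0 * (M 1 0 * w 0 + M 1 1 * w 1)
          - w 1 * (M 0 0 * w 0 + M 0 1 * w 1) := funext hf_eq
      rw [this]; fun_prop
    have hS : ∀ x ∈ {x : Fin 2 → ℝ | ∃ A ∈ G,
        x = (A : Matrix (Fin 2) (Fin 2) ℝ).mulVec v}, f x = f v := by
      rintro x ⟨B, hBG, rfl⟩
      have hcomm : M * (B : Matrix (Fin 2) (Fin 2) ℝ)
          = (B : Matrix (Fin 2) (Fin 2) ℝ) * M := by
        have := hab A hAG B hBG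
        have := congrArg (fun X : Matrix.SpecialLinearGroup (Fin 2) ℝ =>
          (X : Matrix (Fin 2) (Fin 2) ℝ)) this
        simpa using this
      exact Q_invariant M (B : Matrix (Fin 2) (Fin 2) ℝ) hcomm B.prop v
    have hconst := dense_const_aux hf hd hS
    -- f vanishes at 0, hence everywhere
    have h0 : f 0 = 0 := by simp [hf_eq]
    have hall : ∀ z, f z = 0 := by
      intro z; rw [hconst z, ← hconst 0, h0]
    have hc0 : M 1 0 = 0 := by have := hall ![1, 0]; rw [hf_eq] at this; simpa using this
    have hb0 : M 0 1 = 0 := by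
      have := hall ![0, 1]; rw [hf_eq] at this
      simp at this; linarith
    have had : M 1 1 = M 0 0 := by
      have := hall ![1, 1]; rw [hf_eq] at this
      simp at this; linarith
    have hdet : M.det = 1 := A.prop
    rw [Matrix.det_fin_two] at hdet
    have hsq : (M 0 0 - 1) * (M 0 0 + 1) = 0 := by
      linear_combination hdet - M 0 0 * had + M 1 0 * hb0
    rcases mul_eq_zero.mp hsq with h | h
    · apply hA1
      ext i j
      fin_cases i <;> fin_cases j <;>
        simp [Matrix.one_apply, hc0, hb0, had] <;> linarith
    · apply hA2
      ext i j
      fin_cases i <;> fin_cases j <;>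
        simp [Matrix.one_apply, hc0, hb0, had] <;> linarith
  · -- every element of G is ±1; the orbit lies in {v, -v}
    push_neg at hA
    by_cases hv : v = 0
    · -- orbit is {0}
      have hS : ∀ x ∈ {x : Fin 2 → ℝ | ∃ A ∈ G,
          x = (A : Matrix (Fin 2) (Fin 2) ℝ).mulVec v}, (fun w : Fin 2 → ℝ => w 0) x = 0 := by
        rintro x ⟨B, hBG, rfl⟩
        simp [hv, Matrix.mulVec_zero]
      have hconst := dense_const_aux (by fun_prop) hd hS
      have := hconst ![1, 0]
      norm_num at this
    · -- orbit lies on the line spanned by v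
      set f : (Fin 2 → ℝ) → ℝ := fun w => v 1 * w 0 - v 0 * w 1 with hf_def
      have hS : ∀ x ∈ {x : Fin 2 → ℝ | ∃ A ∈ G,
          x = (A : Matrix (Fin 2) (Fin 2) ℝ).mulVec v}, f x = 0 := by
        rintro x ⟨B, hBG, rfl⟩
        rcases (em ((B : Matrix (Fin 2) (Fin 2) ℝ) = 1)) with h1 | h1
        · rw [h1, Matrix.one_mulVec]; simp [hf_def]; ring
        · have h2 := hA B hBG h1
          rw [h2]
          have : (-1 : Matrix (Fin 2) (Fin 2) ℝ).mulVec v = -v := by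
            rw [Matrix.neg_mulVec, Matrix.one_mulVec]
          rw [this]; simp [hf_def]; ring
      have hconst := dense_const_aux (by fun_prop) hd hS
      have h1 := hconst ![v 1, -(v 0)]
      simp [hf_def] at h1
      have h00 : v 0 = 0 := by nlinarith [sq_nonneg (v 0), sq_nonneg (v 1)]
      have h11 : v 1 = 0 := by nlinarith [sq_nonneg (v 0), sq_nonneg (v 1)]
      apply hv
      funext i
      fin_cases i <;> simpa
end

section
/- Let G be the abelian subgroup of GL(2,ℝ) generated by the diagonal matrices A₁ = diag(−e^{√2/2}, 1), A₂ = diag(1, −e^{1/2}), A₃ = diag(e^{−√3/2}, e^{−√2/2}). Then G has a dense orbit in ℝ²; in fact the orbit of every point of ℝ* × ℝ* is dense in ℝ². -/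
/-!
Every element of the group is diagonal, so the orbit of `v` is `{d * v}` with `d` running over
the diagonals of the group, and it suffices that these diagonals are dense in `ℝ²`.
On the positive quadrant, the chart `y ↦ (exp (√2 y₀), exp y₁)` pulls the diagonals of
`A₁², A₂², A₃⁻¹` back to `(1, 0), (0, 1), (s, t)` with `s = √3 / (2√2)`, `t = √2 / 2`.
Since `1, s, t` are rationally independent (equivalently, so are `2, √2, √3`), the subgroup they
generate is dense: having rank `3 > 2` it is not discrete, so its closure contains a line, and the
projection along that line is a subgroup of `ℝ` generated by incommensurable numbers.
The signs of `A₁` and `A₂` carry the positive quadrant to the other three.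
-/

open Filter Topology Set Submodule Real Matrix

theorem Irrational.eq_zero_of_intCast_mul_eq {x : ℝ} (hx : Irrational x) {n m : ℤ}
    (h : n * x = m) : n = 0 := by
  by_contra hn
  exact (hx.intCast_mul hn).ne_int m h

theorem irrational_sqrt_six : Irrational √6 := by
  refine irrational_sqrt_ofNat_iff.2 fun ⟨r, hr⟩ => ?_
  have : r ≤ 3 := by nlinarith
  interval_cases r <;> omega

theorem eq_zero_of_add_mul_sqrt_two_add_mul_sqrt_three_eq_zero {a b c : ℤ}
    (h : a + b * √2 + c * √3 = 0) : a = 0 ∧ b = 0 ∧ c = 0 := by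
  have h2 : √2 * √2 = 2 := mul_self_sqrt zero_le_two
  have h3 : √3 * √3 = 3 := mul_self_sqrt (by norm_num)
  have h6 : √2 * √3 = √6 := by rw [← sqrt_mul zero_le_two]; norm_num
  -- squaring `a + b√2 = -c√3` leaves `2ab√2` as the only irrational term
  have hab : a = 0 ∨ b = 0 := by
    have hsq : ((2 * a * b : ℤ) : ℝ) * √2 = ((3 * c ^ 2 - a ^ 2 - 2 * b ^ 2 : ℤ) : ℝ) := by
      push_cast
      linear_combination (a + b * √2 - c * √3) * h - b ^ 2 * h2 + c ^ 2 * h3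
    simpa using irrational_sqrt_two.eq_zero_of_intCast_mul_eq hsq
  rcases hab with rfl | rfl
  · have hc : c = 0 := by
      refine irrational_sqrt_six.eq_zero_of_intCast_mul_eq (m := -2 * b) ?_
      push_cast
      linear_combination √2 * h - b * h2 - c * h6
    subst hc
    have hb : b = 0 := irrational_sqrt_two.eq_zero_of_intCast_mul_eq (m := 0) (by simpa using h)
    exact ⟨rfl, hb, rfl⟩
  · have hc : c = 0 := Nat.prime_three.irrational_sqrt.eq_zero_of_intCast_mul_eq (m := -a)
      (by push_cast; linear_combination h)
    subst hc
    exact ⟨by simpa using h, rfl, rfl⟩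

theorem tendsto_floor_div_mul {α : Type*} {l : Filter α} {r : α → ℝ} (hr : Tendsto r l (𝓝 0))
    (hpos : ∀ n, 0 < r n) (t : ℝ) : Tendsto (fun n => ⌊t / r n⌋ * r n) l (𝓝 t) := by
  have hlow : Tendsto (fun n => t - r n) l (𝓝 t) := by simpa using tendsto_const_nhds.sub hr
  refine tendsto_of_tendsto_of_tendsto_of_le_of_le hlow tendsto_const_nhds (fun n => ?_)
    (fun n => ?_)
  · calc t - r n = (t / r n - 1) * r n := by field_simp [(hpos n).ne']
      _ ≤ ⌊t / r n⌋ * r n := by gcongr; exacts [(hpos n).le, (Int.sub_one_lt_floor _).le]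
  · calc (⌊t / r n⌋ : ℝ) * r n ≤ t / r n * r n := by gcongr; exacts [(hpos n).le, Int.floor_le _]
      _ = t := div_mul_cancel₀ t (hpos n).ne'

theorem exists_ne_zero_norm_lt_of_not_discreteTopology {E : Type*}
    [SeminormedAddCommGroup E] {L : AddSubgroup E} (hL : ¬ DiscreteTopology L) {ε : ℝ}
    (hε : 0 < ε) : ∃ x ∈ L, x ≠ 0 ∧ ‖x‖ < ε := by
  contrapose! hL
  rw [discreteTopology_iff_isOpen_singleton_zero, Metric.isOpen_singleton_iff]
  refine ⟨ε, hε, fun y hy => ?_⟩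
  by_contra hy0
  exact (hL y y.2 (by simpa using hy0)).not_gt (by simpa using hy)

theorem not_discreteTopology_span_int {E : Type*} [NormedAddCommGroup E] [NormedSpace ℝ E]
    [FiniteDimensional ℝ E] {ι : Type*} [Fintype ι] {v : ι → E} (hv : LinearIndependent ℤ v)
    (hcard : Module.finrank ℝ E < Fintype.card ι) : ¬ DiscreteTopology (span ℤ (range v)) := by
  intro hdisc
  have h := Real.finrank_eq_int_finrank_of_discrete hdisc
  rw [Set.finrank, Set.finrank, finrank_span_eq_card hv] at h
  have := Submodule.finrank_le (span ℝ (range v))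
  omega

theorem exists_ne_zero_span_singleton_subset_closure_of_not_discreteTopology {E : Type*}
    [NormedAddCommGroup E] [NormedSpace ℝ E] [FiniteDimensional ℝ E] (L : AddSubgroup E)
    (hL : ¬ DiscreteTopology L) : ∃ u ≠ (0 : E), (span ℝ {u} : Set E) ⊆ closure L := by
  have hsmall (n : ℕ) : ∃ x ∈ L, x ≠ 0 ∧ ‖x‖ < 1 / (n + 1) :=
    exists_ne_zero_norm_lt_of_not_discreteTopology hL (by positivity)
  choose x hxL hx0 hxlt using hsmall
  have hnorm : Tendsto (fun n => ‖x n‖) atTop (𝓝 0) :=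
    squeeze_zero (fun _ => norm_nonneg _) (fun n => (hxlt n).le)
      tendsto_one_div_add_atTop_nhds_zero_nat
  -- the direction `u` is a limit of the normalized small elements `x n / ‖x n‖`
  obtain ⟨u, hu, φ, hφ, hlim⟩ := (isCompact_sphere (0 : E) 1).tendsto_subseq
    (x := fun n => ‖x n‖⁻¹ • x n) fun n => by simp [norm_smul, hx0 n]
  refine ⟨u, ne_zero_of_mem_sphere one_ne_zero ⟨u, hu⟩, fun _ hy => ?_⟩
  obtain ⟨t, rfl⟩ := mem_span_singleton.1 hy
  have hscale := tendsto_floor_div_mul (hnorm.comp hφ.tendsto_atTop)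
    (fun n => norm_pos_iff.2 (hx0 (φ n))) t
  refine mem_closure_of_tendsto ((hscale.smul hlim).congr fun n => ?_)
    (Eventually.of_forall fun n => zsmul_mem (hxL (φ n)) ⌊t / ‖x (φ n)‖⌋)
  simp only [Function.comp_apply, smul_smul, mul_assoc, Int.cast_smul_eq_zsmul,
    mul_inv_cancel₀ (norm_ne_zero_iff.2 (hx0 (φ n))), mul_one]

theorem dense_of_ker_subset_closure {E : Type*} [AddCommGroup E] [TopologicalSpace E]
    [IsTopologicalAddGroup E] [Module ℝ E] [ContinuousSMul ℝ E] (L : AddSubgroup E)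
    (f : E →L[ℝ] ℝ) (hf : f ≠ 0) (hker : f ⁻¹' {0} ⊆ closure L) (hdense : Dense (f '' L)) :
    Dense (L : Set E) := by
  have hsub : f ⁻¹' (f '' L) ⊆ closure L := by
    rintro y ⟨x, hx, hxy⟩
    have hdiff : y - x ∈ L.topologicalClosure := hker (by simp [hxy])
    rw [← L.topologicalClosure_coe, ← add_sub_cancel x y]
    exact L.topologicalClosure.add_mem (L.le_topologicalClosure hx) hdiff
  exact dense_closure.mp ((hdense.preimage (f.isOpenMap_of_ne_zero hf)).mono hsub)

theorem ContinuousLinearMap.apply_fin_two (f : (Fin 2 → ℝ) →L[ℝ] ℝ) (x : Fin 2 → ℝ) :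
    f x = x 0 * f ![1, 0] + x 1 * f ![0, 1] := by
  have hx : x = x 0 • ![1, 0] + x 1 • ![0, 1] := by ext i; fin_cases i <;> simp
  nth_rewrite 1 [hx]
  rw [map_add, map_smul, map_smul, smul_eq_mul, smul_eq_mul]

theorem exists_ne_zero_ker_subset_span_singleton {u : Fin 2 → ℝ} (hu : u ≠ 0) :
    ∃ f : (Fin 2 → ℝ) →L[ℝ] ℝ, f ≠ 0 ∧ f ⁻¹' {0} ⊆ span ℝ {u} := by
  let f : (Fin 2 → ℝ) →L[ℝ] ℝ :=
    u 1 • ContinuousLinearMap.proj 0 - u 0 • ContinuousLinearMap.proj 1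
  have hf (y : Fin 2 → ℝ) : f y = u 1 * y 0 - u 0 * y 1 := rfl
  refine ⟨f, fun h0 => hu ?_, fun y hy => mem_span_singleton.2 ?_⟩
  · have h₀ := congrArg (· ![1, 0]) h0
    have h₁ := congrArg (· ![0, 1]) h0
    simp only [hf] at h₀ h₁
    ext i; fin_cases i <;> simp_all
  · have hy : u 1 * y 0 = u 0 * y 1 := by simpa [hf, sub_eq_zero] using hy
    by_cases hu0 : u 0 = 0
    · have hu1 : u 1 ≠ 0 := fun hu1 => hu (by ext i; fin_cases i <;> simp [hu0, hu1])
      have hy0 : y 0 = 0 := by simpa [hu0, hu1] using hy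
      refine ⟨y 1 / u 1, ?_⟩
      ext i; fin_cases i
      · simp [hu0, hy0]
      · simp [hu1]
    · refine ⟨y 0 / u 0, ?_⟩
      ext i; fin_cases i
      · simp [hu0]
      · simp only [Fin.mk_one, Pi.smul_apply, smul_eq_mul]
        field_simp
        linarith

theorem dense_of_not_discreteTopology_of_forall_dense_image (L : AddSubgroup (Fin 2 → ℝ))
    (hL : ¬ DiscreteTopology L)
    (himage : ∀ f : (Fin 2 → ℝ) →L[ℝ] ℝ, f ≠ 0 → Dense (f '' L)) :
    Dense (L : Set (Fin 2 → ℝ)) := by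
  obtain ⟨u, hu, hline⟩ :=
    exists_ne_zero_span_singleton_subset_closure_of_not_discreteTopology L hL
  obtain ⟨f, hf, hker⟩ := exists_ne_zero_ker_subset_span_singleton hu
  exact dense_of_ker_subset_closure L f hf (hker.trans hline) (himage f hf)

theorem dense_addSubgroupClosure_kronecker (s t : ℝ)
    (hst : ∀ a b c : ℤ, a + b * s + c * t = 0 → a = 0 ∧ b = 0 ∧ c = 0) :
    Dense (AddSubgroup.closure {![1, 0], ![0, 1], ![s, t]} : Set (Fin 2 → ℝ)) := by
  apply dense_of_not_discreteTopology_of_forall_dense_image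
  · have hv : LinearIndependent ℤ ![![1, 0], ![0, 1], ![s, t]] := by
      refine Fintype.linearIndependent_iff.2 fun g hg => ?_
      have h₀ : (g 0 : ℝ) + g 2 * s + 0 * t = 0 := by
        simpa [Fin.sum_univ_three] using congrFun hg 0
      have h₁ : (g 1 : ℝ) + g 2 * t = 0 := by simpa [Fin.sum_univ_three] using congrFun hg 1
      obtain ⟨hg₀, hg₂, -⟩ := hst (g 0) (g 2) 0 (mod_cast h₀)
      have hg₁ : g 1 = 0 := by simpa [hg₂] using h₁
      intro i; fin_cases i <;> assumption
    have hrange : range ![![1, 0], ![0, 1], ![s, t]] = {![1, 0], ![0, 1], ![s, t]} := by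
      rw [Matrix.range_cons, Matrix.range_cons, Matrix.range_cons, Matrix.range_empty,
        Set.union_empty, Set.singleton_union, Set.singleton_union]
    have := not_discreteTopology_span_int hv (by simp)
    rw [hrange] at this
    rwa [← Submodule.span_int_eq_addSubgroupClosure]
  · intro f hf
    have himage : f '' (AddSubgroup.closure {![1, 0], ![0, 1], ![s, t]} : Set (Fin 2 → ℝ)) =
        AddSubgroup.closure {f ![1, 0], f ![0, 1], f ![s, t]} := by
      have := AddMonoidHom.map_closure (f : (Fin 2 → ℝ) →+ ℝ) {![1, 0], ![0, 1], ![s, t]}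
      rw [SetLike.ext'_iff, AddSubgroup.coe_map] at this
      simpa [Set.image_insert_eq] using this
    rw [himage]
    refine (AddSubgroup.dense_or_cyclic _).resolve_right fun ⟨α, hα⟩ => hf ?_
    have hmem {x : ℝ} (hx : x ∈ ({f ![1, 0], f ![0, 1], f ![s, t]} : Set ℝ)) :
        ∃ n : ℤ, n * α = x := by
      simpa [hα, AddSubgroup.mem_closure_singleton] using AddSubgroup.subset_closure hx
    obtain ⟨m, hm⟩ := hmem (x := f ![1, 0]) (by simp)
    obtain ⟨n, hn⟩ := hmem (x := f ![0, 1]) (by simp)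
    obtain ⟨k, hk⟩ := hmem (x := f ![s, t]) (by simp)
    have hf_eq (x : Fin 2 → ℝ) : f x = (x 0 * m + x 1 * n) * α := by
      rw [f.apply_fin_two, ← hm, ← hn]; ring
    ext x
    rcases eq_or_ne α 0 with rfl | hα
    · simp [hf_eq]
    have hfst : f ![s, t] = (s * m + t * n) * α := by simpa using hf_eq ![s, t]
    obtain ⟨-, hm0, hn0⟩ := hst (-k) m n (mul_right_cancel₀ hα (by
      push_cast; linear_combination -hk - hfst))
    simp [hf_eq, hm0, hn0]

theorem dense_of_pos_subset_closure {ι : Type*} [Fintype ι] [DecidableEq ι]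
    (S : Submonoid (ι → ℝ)) (hpos : {x | ∀ i, 0 < x i} ⊆ closure (S : Set (ι → ℝ)))
    (hneg : ∀ i, ∃ c ∈ S, c i < 0 ∧ ∀ j ≠ i, 0 < c j) : Dense (S : Set (ι → ℝ)) := by
  let C := S.topologicalClosure
  have hposC (x : ι → ℝ) (hx : ∀ i, 0 < x i) : x ∈ C := by
    rw [← SetLike.mem_coe, S.coe_topologicalClosure]; exact hpos hx
  have hflip (i : ι) : Pi.mulSingle i (-1 : ℝ) ∈ C := by
    obtain ⟨c, hcS, hci, hcj⟩ := hneg i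
    have hc : Pi.mulSingle i (-1 : ℝ) = c * fun j => (Pi.mulSingle i (-1) : ι → ℝ) j / c j := by
      ext j
      rcases eq_or_ne j i with rfl | hj
      · simp [mul_div_cancel₀ _ hci.ne]
      · simp [hj, (hcj j hj).ne']
    rw [hc]
    refine C.mul_mem (S.le_topologicalClosure hcS) (hposC _ fun j => ?_)
    rcases eq_or_ne j i with rfl | hj
    · simpa using div_pos_of_neg_of_neg neg_one_lt_zero hci
    · simpa [hj] using hcj j hj
  have hnz (y : ι → ℝ) (hy : ∀ i, y i ≠ 0) : y ∈ C := by
    have hy_eq : y = (∏ i, Pi.mulSingle i (if y i < 0 then -1 else 1 : ℝ)) * fun i => |y i| := by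
      rw [Finset.univ_prod_mulSingle]
      ext i
      simp only [Pi.mul_apply]
      split_ifs with h
      · simp [abs_of_neg h]
      · simp [abs_of_nonneg (not_lt.1 h)]
    rw [hy_eq]
    refine C.mul_mem (C.prod_mem fun i _ => ?_) (hposC _ fun i => abs_pos.2 (hy i))
    split_ifs
    · exact hflip i
    · simp
  have hdense : Dense {y : ι → ℝ | ∀ i, y i ≠ 0} := by
    simpa [Set.pi] using dense_pi Set.univ fun (i : ι) _ => dense_compl_singleton (0 : ℝ)
  rw [← dense_closure, ← S.coe_topologicalClosure]
  exact hdense.mono hnz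

def diagonalSubmonoid {n R : Type*} [Fintype n] [DecidableEq n] [CommRing R]
    (G : Subgroup (GL n R)) : Submonoid (n → R) :=
  (G.toSubmonoid.map (Units.coeHom _)).comap (diagonalRingHom n R).toMonoidHom

theorem mem_diagonalSubmonoid {n R : Type*} [Fintype n] [DecidableEq n] [CommRing R]
    {G : Subgroup (GL n R)} {d : n → R} :
    d ∈ diagonalSubmonoid G ↔ ∃ A ∈ G, (A : Matrix n n R) = diagonal d := by
  simp [diagonalSubmonoid]

theorem mem_diagonalSubmonoid_of_mul_eq_one {n R : Type*} [Fintype n] [DecidableEq n]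
    [CommRing R] {G : Subgroup (GL n R)} {d e : n → R} (hd : d ∈ diagonalSubmonoid G)
    (he : e * d = 1) : e ∈ diagonalSubmonoid G := by
  obtain ⟨A, hA, hAd⟩ := mem_diagonalSubmonoid.1 hd
  refine mem_diagonalSubmonoid.2 ⟨A⁻¹, G.inv_mem hA, (Units.eq_inv_of_mul_eq_one_left ?_).symm⟩
  rw [hAd, diagonal_mul_diagonal, ← diagonal_one]
  congr 1
  ext i
  simpa [mul_comm] using congrFun he i

theorem dense_orbit_of_dense_diagonalSubmonoid {n : Type*} [Fintype n] [DecidableEq n]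
    {G : Subgroup (GL n ℝ)} (hG : Dense (diagonalSubmonoid G : Set (n → ℝ))) {v : n → ℝ}
    (hv : ∀ i, v i ≠ 0) : Dense {x | ∃ A ∈ G, x = (A : Matrix n n ℝ) *ᵥ v} := by
  have hsurj : Function.Surjective fun d : n → ℝ => d * v := fun x =>
    ⟨x / v, by ext i; simp [hv i]⟩
  refine (hsurj.denseRange.dense_image (continuous_mul_const v) hG).mono ?_
  rintro _ ⟨d, hd, rfl⟩
  obtain ⟨A, hA, hAd⟩ := mem_diagonalSubmonoid.1 hd
  exact ⟨A, hA, by ext i; simp [hAd, mulVec_diagonal]⟩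

noncomputable def expChart (y : Fin 2 → ℝ) : Fin 2 → ℝ := ![exp (√2 * y 0), exp (y 1)]

theorem continuous_expChart : Continuous expChart := by
  refine continuous_pi fun i => ?_
  fin_cases i <;> simp only [expChart] <;> fun_prop

theorem expChart_add (x y : Fin 2 → ℝ) : expChart (x + y) = expChart x * expChart y := by
  ext i; fin_cases i <;> simp [expChart, mul_add, exp_add]

theorem expChart_neg_mul (x : Fin 2 → ℝ) : expChart (-x) * expChart x = 1 := by
  rw [← expChart_add, neg_add_cancel]
  ext i; fin_cases i <;> simp [expChart]

theorem expChart_mem_diagonalSubmonoid {G : Subgroup (GL (Fin 2) ℝ)}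
    (h₁ : ![-exp (√2 / 2), 1] ∈ diagonalSubmonoid G)
    (h₂ : ![1, -exp (1 / 2)] ∈ diagonalSubmonoid G)
    (h₃ : ![exp (-(√3 / 2)), exp (-(√2 / 2))] ∈ diagonalSubmonoid G) {x : Fin 2 → ℝ}
    (hx : x ∈ AddSubgroup.closure {![1, 0], ![0, 1], ![√3 / (2 * √2), √2 / 2]}) :
    expChart x ∈ diagonalSubmonoid G := by
  induction hx using AddSubgroup.closure_induction with
  | mem x hx =>
    rcases hx with rfl | rfl | rfl
    · convert (diagonalSubmonoid G).mul_mem h₁ h₁ using 1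
      ext i; fin_cases i <;> simp [expChart, ← exp_add]
    · convert (diagonalSubmonoid G).mul_mem h₂ h₂ using 1
      ext i; fin_cases i <;> simp [expChart, ← exp_add]; norm_num
    · refine mem_diagonalSubmonoid_of_mul_eq_one h₃ ?_
      have h₂₃ : √2 * (√3 / (2 * √2)) = √3 / 2 := by field_simp
      ext i; fin_cases i <;> simp [expChart, ← exp_add, h₂₃]
  | zero =>
    convert (diagonalSubmonoid G).one_mem
    ext i; fin_cases i <;> simp [expChart]
  | add x y _ _ hx hy => rw [expChart_add]; exact (diagonalSubmonoid G).mul_mem hx hy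
  | neg x _ hx => exact mem_diagonalSubmonoid_of_mul_eq_one hx (expChart_neg_mul x)

theorem eq_zero_of_add_mul_sqrt_three_div_add_mul_sqrt_two_div_eq_zero {a b c : ℤ}
    (h : a + b * (√3 / (2 * √2)) + c * (√2 / 2) = 0) : a = 0 ∧ b = 0 ∧ c = 0 := by
  have h2 : √2 * √2 = 2 := mul_self_sqrt zero_le_two
  have h' : ((2 * c : ℤ) : ℝ) + (2 * a : ℤ) * √2 + b * √3 = 0 := by
    have : √2 ≠ 0 := by positivity
    field_simp at h
    push_cast
    linear_combination h - c * h2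
  obtain ⟨hc, ha, hb⟩ := eq_zero_of_add_mul_sqrt_two_add_mul_sqrt_three_eq_zero h'
  omega

theorem dense_diagonalSubmonoid {G : Subgroup (GL (Fin 2) ℝ)}
    (h₁ : ![-exp (√2 / 2), 1] ∈ diagonalSubmonoid G)
    (h₂ : ![1, -exp (1 / 2)] ∈ diagonalSubmonoid G)
    (h₃ : ![exp (-(√3 / 2)), exp (-(√2 / 2))] ∈ diagonalSubmonoid G) :
    Dense (diagonalSubmonoid G : Set (Fin 2 → ℝ)) := by
  have hlattice := dense_addSubgroupClosure_kronecker (√3 / (2 * √2)) (√2 / 2) fun _ _ _ =>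
    eq_zero_of_add_mul_sqrt_three_div_add_mul_sqrt_two_div_eq_zero
  apply dense_of_pos_subset_closure
  · intro x hx
    have hrange : x ∈ range expChart :=
      ⟨![log (x 0) / √2, log (x 1)], by
        ext i; fin_cases i <;> simp [expChart, mul_div_cancel₀, exp_log (hx _)]⟩
    refine closure_mono ?_ (continuous_expChart.range_subset_closure_image_dense hlattice hrange)
    rintro _ ⟨y, hy, rfl⟩
    exact expChart_mem_diagonalSubmonoid h₁ h₂ h₃ hy
  · intro i
    fin_cases i
    · exact ⟨_, h₁, by simp [exp_pos], by simp⟩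
    · exact ⟨_, h₂, by simp [exp_pos], by simp⟩

/-- Example 9.2: the abelian subgroup of `GL(2, ℝ)` generated by
`A₁ = diag(-e^{√2/2}, 1)`, `A₂ = diag(1, -e^{1/2})`, `A₃ = diag(e^{-√3/2}, e^{-√2/2})`
has a dense orbit in `ℝ²`; in fact every orbit of a point of `ℝ* × ℝ*` is dense. -/
theorem example_diag_dense_orbits
    (g₁ g₂ g₃ : Matrix.GeneralLinearGroup (Fin 2) ℝ)
    (h₁ : (g₁ : Matrix (Fin 2) (Fin 2) ℝ) =
      !![-(Real.exp (Real.sqrt 2 / 2)), 0; 0, 1])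
    (h₂ : (g₂ : Matrix (Fin 2) (Fin 2) ℝ) =
      !![1, 0; 0, -(Real.exp (1 / 2))])
    (h₃ : (g₃ : Matrix (Fin 2) (Fin 2) ℝ) =
      !![Real.exp (-(Real.sqrt 3 / 2)), 0; 0, Real.exp (-(Real.sqrt 2 / 2))]) :
    (∃ v : Fin 2 → ℝ,
      Dense {x : Fin 2 → ℝ | ∃ A ∈ Subgroup.closure {g₁, g₂, g₃},
        x = (A : Matrix (Fin 2) (Fin 2) ℝ).mulVec v}) ∧
    ∀ v : Fin 2 → ℝ, v 0 ≠ 0 → v 1 ≠ 0 →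
      Dense {x : Fin 2 → ℝ | ∃ A ∈ Subgroup.closure {g₁, g₂, g₃},
        x = (A : Matrix (Fin 2) (Fin 2) ℝ).mulVec v} := by
  have hmem {g : GL (Fin 2) ℝ} (hg : g ∈ ({g₁, g₂, g₃} : Set (GL (Fin 2) ℝ))) {a b : ℝ}
      (hab : (g : Matrix (Fin 2) (Fin 2) ℝ) = !![a, 0; 0, b]) :
      ![a, b] ∈ diagonalSubmonoid (Subgroup.closure {g₁, g₂, g₃}) :=
    mem_diagonalSubmonoid.2 ⟨g, Subgroup.subset_closure hg, by rw [hab, diagonal_vec2]⟩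
  have hdense := dense_diagonalSubmonoid (hmem (by simp) h₁) (hmem (by simp) h₂)
    (hmem (by simp) h₃)
  have horbit (v : Fin 2 → ℝ) (hv₀ : v 0 ≠ 0) (hv₁ : v 1 ≠ 0) :=
    dense_orbit_of_dense_diagonalSubmonoid hdense (v := v) (by simp [Fin.forall_fin_two, hv₀, hv₁])
  exact ⟨⟨![1, 1], horbit _ one_ne_zero one_ne_zero⟩, horbit⟩
end
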